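/- arXiv:2602.20297 — 5 statements merged into one kernel-verified Lean document; each statement's English description precedes it below -/
import Mathlib

section
/- Let A and B be d×d real positive definite matrices with A ⪰ B (i.e. A − B is positive semidefinite). Then for every vector x ∈ R^d, ‖x‖_A ≤ ‖x‖_B · √(det(A)/det(B)), where ‖x‖_M := √(xᵀ M x). -/
open scoped Matrix

open Matrix

open Matrix

open scoped MatrixOrder

lemma aux_eig_ge_one {d : ℕ} {M : Matrix (Fin d) (Fin d) ℝ} (hM : M.IsHermitian)
    (h1 : (M - 1).PosSemidef) (i : Fin d) : 1 ≤ hM.eigenvalues i := by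
  set v : Fin d → ℝ := ⇑(hM.eigenvectorBasis i) with hv
  have hnorm : v ⬝ᵥ v = 1 := by
    have h := hM.eigenvectorBasis.orthonormal.1 i
    have : (inner ℝ (hM.eigenvectorBasis i) (hM.eigenvectorBasis i) : ℝ) = 1 := by
      rw [real_inner_self_eq_norm_sq, h]; norm_num
    rw [← this, PiLp.inner_apply]
    simp [dotProduct, hv, mul_comm, sq]
  have hpos := h1.dotProduct_mulVec_nonneg v
  have hmv : (M - 1) *ᵥ v = (hM.eigenvalues i - 1) • v := by
    rw [sub_mulVec, hM.mulVec_eigenvectorBasis, one_mulVec, sub_smul, one_smul]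
  rw [hmv] at hpos
  have : 0 ≤ (hM.eigenvalues i - 1) * (v ⬝ᵥ v) := by
    simpa [dotProduct_smul, smul_eq_mul, star_trivial] using hpos
  rw [hnorm, mul_one] at this
  linarith

lemma aux_key0 {d : ℕ} {M : Matrix (Fin d) (Fin d) ℝ} (hM : M.IsHermitian)
    (h1 : (M - 1).PosSemidef) (x : Fin d → ℝ) :
    x ⬝ᵥ M *ᵥ x ≤ M.det * (x ⬝ᵥ x) := by
  set U : Matrix (Fin d) (Fin d) ℝ := (hM.eigenvectorUnitary : Matrix (Fin d) (Fin d) ℝ) with hU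
  have hU1 : U * star U = 1 := Matrix.mem_unitaryGroup_iff.mp hM.eigenvectorUnitary.2
  set y : Fin d → ℝ := x ᵥ* U with hy
  set lam : Fin d → ℝ := hM.eigenvalues with hlam
  have hsU : star U = Uᵀ := by
    ext i j; simp [Matrix.star_apply, star_trivial]
  have hMx : x ⬝ᵥ M *ᵥ x = ∑ i, lam i * (y i)^2 := by
    nth_rewrite 1 [hM.spectral_theorem]
    rw [Unitary.conjStarAlgAut_apply, ← hU]
    rw [← Matrix.mulVec_mulVec, ← Matrix.mulVec_mulVec, dotProduct_mulVec, ← hy]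
    rw [hsU, Matrix.mulVec_transpose, ← hy]
    simp [Matrix.mulVec_diagonal, dotProduct, Function.comp, mul_comm, sq, mul_assoc, mul_left_comm]
    rfl
  have hxx : x ⬝ᵥ x = ∑ i, (y i)^2 := by
    have h2 : y ⬝ᵥ y = x ⬝ᵥ x := by
      rw [hy, ← dotProduct_mulVec, ← Matrix.mulVec_transpose, Matrix.mulVec_mulVec, ← hsU,
        hU1, one_mulVec]
    rw [← h2, dotProduct]
    simp [sq]
  have hdet : M.det = ∏ i, lam i := by simpa using hM.det_eq_prod_eigenvalues
  have hge : ∀ i, 1 ≤ lam i := aux_eig_ge_one hM h1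
  have hle : ∀ i, lam i ≤ M.det := fun i => by
    rw [hdet, ← Finset.mul_prod_erase Finset.univ lam (Finset.mem_univ i)]
    have h1 : (1:ℝ) ≤ ∏ j ∈ Finset.univ.erase i, lam j := by
      calc (1:ℝ) = ∏ j ∈ Finset.univ.erase i, 1 := by simp
        _ ≤ ∏ j ∈ Finset.univ.erase i, lam j :=
          Finset.prod_le_prod (by simp) (fun j _ => hge j)
    nlinarith [hge i]
  rw [hMx, hxx, Finset.mul_sum]
  exact Finset.sum_le_sum fun i _ => mul_le_mul_of_nonneg_right (hle i) (sq_nonneg _)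

lemma aux_psd_posDef {d : ℕ} {M : Matrix (Fin d) (Fin d) ℝ}
    (hM : M.PosSemidef) (hdet : IsUnit M) : M.PosDef := by
  refine posDef_iff_dotProduct_mulVec.2 ⟨hM.1, fun x hx => ?_⟩
  rcases (hM.dotProduct_mulVec_nonneg x).lt_or_eq with h | h
  · simpa using h
  · exfalso
    have h0 : M *ᵥ x = 0 := (hM.dotProduct_mulVec_zero_iff x).1 h.symm
    have hinj := Matrix.mulVec_injective_iff_isUnit.mpr hdet
    exact hx (hinj (h0.trans (Matrix.mulVec_zero M).symm))

/-- Lemma 12 of Abbasi-Yadkori et al. 2011.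
If `A` and `B` are `d × d` real positive definite matrices with `A ⪰ B`
(i.e. `A - B` is positive semidefinite), then for every `x ∈ ℝ^d`,
`‖x‖_A ≤ ‖x‖_B · √(det A / det B)`, where `‖x‖_M = √(xᵀ M x)`. -/
theorem stmt_0 {d : ℕ} (A B : Matrix (Fin d) (Fin d) ℝ)
    (hA : A.PosDef) (hB : B.PosDef) (hAB : (A - B).PosSemidef) (x : Fin d → ℝ) :
    Real.sqrt (x ⬝ᵥ A.mulVec x) ≤
      Real.sqrt (x ⬝ᵥ B.mulVec x) * Real.sqrt (A.det / B.det) := by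
  have hBsd := hB.posSemidef
  set S : Matrix (Fin d) (Fin d) ℝ := CFC.sqrt B with hSdef
  have hSpsd : S.PosSemidef := (CFC.sqrt_nonneg B).posSemidef
  have hSS : S * S = B := CFC.sqrt_mul_sqrt_self B hBsd.nonneg
  have hSdetsq : S.det * S.det = B.det := by rw [← Matrix.det_mul, hSS]
  have hSdetne : S.det ≠ 0 := by
    intro h; rw [h, mul_zero] at hSdetsq; exact hB.det_pos.ne hSdetsq
  have hSunit : IsUnit S := (Matrix.isUnit_iff_isUnit_det _).2 hSdetne.isUnit
  have hSpd : S.PosDef := aux_psd_posDef hSpsd hSunit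
  set T : Matrix (Fin d) (Fin d) ℝ := S⁻¹ with hTdef
  have hTS : T * S = 1 := Matrix.nonsing_inv_mul S hSdetne.isUnit
  have hST : S * T = 1 := Matrix.mul_nonsing_inv S hSdetne.isUnit
  have hTpd : T.PosDef := hSpd.inv
  have hTherm : Tᴴ = T := hTpd.1
  have hSherm : Sᴴ = S := hSpsd.1
  set M : Matrix (Fin d) (Fin d) ℝ := T * A * T with hMdef
  have hMherm : M.IsHermitian := by
    show Mᴴ = M
    rw [hMdef, Matrix.conjTranspose_mul, Matrix.conjTranspose_mul, hTherm, hA.1.eq]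
    rw [Matrix.mul_assoc]
  have hTBT : T * B * T = 1 := by
    rw [← hSS, ← Matrix.mul_assoc, Matrix.mul_assoc (T * S), hTS, hST, one_mul]
  have hM1 : (M - 1).PosSemidef := by
    have : M - 1 = Tᴴ * (A - B) * T := by
      rw [hTherm, hMdef, ← hTBT, Matrix.mul_sub, Matrix.sub_mul]
    rw [this]
    exact hAB.conjTranspose_mul_mul_same T
  have hdetT : T.det = (S.det)⁻¹ := by
    rw [hTdef, Matrix.det_nonsing_inv, Ring.inverse_eq_inv']
  have hdetM : M.det = A.det / B.det := by
    rw [hMdef, Matrix.det_mul, Matrix.det_mul, hdetT, ← hSdetsq]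
    field_simp
  -- apply key lemma to y = S *ᵥ x
  set y : Fin d → ℝ := S *ᵥ x with hy
  have hStr : Sᵀ = S := by
    rw [← Matrix.conjTranspose_eq_transpose_of_trivial, hSherm]
  have hyMy : y ⬝ᵥ M *ᵥ y = x ⬝ᵥ A *ᵥ x := by
    rw [hy, Matrix.mulVec_mulVec, hMdef, Matrix.mul_assoc (T*A), hTS,
      Matrix.mul_one, dotProduct_mulVec, Matrix.vecMul_mulVec, hStr, ← Matrix.mul_assoc,
      hST, one_mul, ← dotProduct_mulVec]
  have hyy : y ⬝ᵥ y = x ⬝ᵥ B *ᵥ x := by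
    rw [hy, dotProduct_mulVec, Matrix.vecMul_mulVec, hStr, hSS, ← dotProduct_mulVec]
  have hkey := aux_key0 hMherm hM1 y
  rw [hyMy, hyy, hdetM] at hkey
  -- now take square roots
  have hBx : 0 ≤ x ⬝ᵥ B *ᵥ x := by simpa using hBsd.dotProduct_mulVec_nonneg x
  calc Real.sqrt (x ⬝ᵥ A.mulVec x)
      ≤ Real.sqrt ((x ⬝ᵥ B.mulVec x) * (A.det / B.det)) := by
        apply Real.sqrt_le_sqrt
        rw [mul_comm]
        exact hkey
    _ = Real.sqrt (x ⬝ᵥ B.mulVec x) * Real.sqrt (A.det / B.det) :=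
        Real.sqrt_mul hBx _
end

section
/- Let {x_k}_{k=1}^{K} be a sequence of vectors in R^d, let Σ_0 be a d×d positive definite matrix, and define Σ_k = Σ_0 + Σ_{i=1}^{k} x_i x_iᵀ. Then for every k ≤ K, Σ_{i=1}^{k} min{1, x_iᵀ Σ_{i−1}^{−1} x_i} ≤ 2 log(det(Σ_k)/det(Σ_0)). Moreover, if ‖x_i‖_2 ≤ L for all i ∈ [K], then Σ_{i=1}^{k} min{1, x_iᵀ Σ_{i−1}^{−1} x_i} ≤ 2( d · log((trace(Σ_0) + k L²)/d) − log det(Σ_0) ). -/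
open scoped Matrix
open Finset

lemma my_psd_vecMulVec {n : Type*} [Fintype n] (v : n → ℝ) :
    (Matrix.vecMulVec v v).PosSemidef := by
  simpa using Matrix.posSemidef_vecMulVec_self_star v

lemma my_min_le_log {t : ℝ} (ht : 0 ≤ t) : min 1 t ≤ 2 * Real.log (1 + t) := by
  have h1t : (0:ℝ) < 1 + t := by linarith
  have hlog : 1 - (1 + t)⁻¹ ≤ Real.log (1 + t) := by
    have h := Real.add_one_le_exp (-Real.log (1 + t))
    rw [Real.exp_neg, Real.exp_log h1t] at h
    linarith
  rcases le_total t 1 with h | h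
  · rw [min_eq_right h]
    have e1 : 1 - (1 + t)⁻¹ = t / (1 + t) := by field_simp; ring
    have e2 : t / 2 ≤ t / (1 + t) := by
      apply div_le_div_of_nonneg_left ht h1t (by linarith)
    rw [e1] at hlog
    linarith
  · rw [min_eq_left h]
    have h2 : Real.log 2 ≤ Real.log (1 + t) := by
      apply Real.log_le_log (by norm_num) (by linarith)
    have h3 : (1:ℝ) / 2 < Real.log 2 := by
      rw [Real.lt_log_iff_exp_lt (by norm_num)]
      have he : Real.exp 1 < 2.7182818286 := Real.exp_one_lt_d9
      have hh : Real.exp (1/2) * Real.exp (1/2) = Real.exp 1 := by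
        rw [← Real.exp_add]; norm_num
      nlinarith [Real.exp_pos (1/2 : ℝ)]
    linarith

lemma my_trace_eq {d : ℕ} {M : Matrix (Fin d) (Fin d) ℝ} (hM : M.IsHermitian) :
    M.trace = ∑ i, hM.eigenvalues i := by
  simpa using hM.trace_eq_sum_eigenvalues

lemma my_det_eq {d : ℕ} {M : Matrix (Fin d) (Fin d) ℝ} (hM : M.IsHermitian) :
    M.det = ∏ i, hM.eigenvalues i := by
  simpa using hM.det_eq_prod_eigenvalues

lemma my_log_det_le {d : ℕ} {M : Matrix (Fin d) (Fin d) ℝ} (hM : M.PosDef) :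
    Real.log M.det ≤ (d : ℝ) * Real.log (M.trace / d) := by
  rcases Nat.eq_zero_or_pos d with hd | hd
  · subst hd
    simp [Matrix.det_isEmpty]
  · have hd' : (0:ℝ) < d := by exact_mod_cast hd
    have hpos : ∀ i, 0 < hM.isHermitian.eigenvalues i := hM.eigenvalues_pos
    have hdet := my_det_eq hM.isHermitian
    have htr := my_trace_eq hM.isHermitian
    have hlogdet : Real.log M.det = ∑ i, Real.log (hM.isHermitian.eigenvalues i) := by
      rw [hdet, Real.log_prod]
      exact fun i _ => (hpos i).ne'
    have hjensen : ∑ i, (d:ℝ)⁻¹ • Real.log (hM.isHermitian.eigenvalues i)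
        ≤ Real.log (∑ i : Fin d, (d:ℝ)⁻¹ • hM.isHermitian.eigenvalues i) := by
      apply (strictConcaveOn_log_Ioi.concaveOn).le_map_sum
      · intro i _; positivity
      · simp [Finset.card_univ]
        field_simp
      · intro i _; exact hpos i
    have hsum : ∑ i : Fin d, (d:ℝ)⁻¹ • hM.isHermitian.eigenvalues i = M.trace / d := by
      rw [htr, Finset.smul_sum.symm]
      simp [smul_eq_mul, div_eq_inv_mul, mul_comm]
    rw [hsum] at hjensen
    simp only [smul_eq_mul, ← Finset.mul_sum] at hjensen
    rw [hlogdet]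
    calc ∑ i, Real.log (hM.isHermitian.eigenvalues i)
        = (d:ℝ) * ((d:ℝ)⁻¹ * ∑ i, Real.log (hM.isHermitian.eigenvalues i)) := by
          field_simp
      _ ≤ (d:ℝ) * Real.log (M.trace / d) := by
          exact mul_le_mul_of_nonneg_left hjensen (le_of_lt hd')

lemma my_row_mul_col {d : ℕ} (A : Matrix (Fin d) (Fin d) ℝ) (v : Fin d → ℝ) :
    ∑ b, (∑ a, v a * A a b) * v b = v ⬝ᵥ A.mulVec v := by
  simp only [dotProduct, Matrix.mulVec, Finset.sum_mul, Finset.mul_sum]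
  rw [Finset.sum_comm]
  exact Finset.sum_congr rfl fun a _ => Finset.sum_congr rfl fun b _ => by ring

/-- Lemma 11 of Abbasi-Yadkori et al. 2011, elliptical potential lemma.
For vectors `x_1, …, x_K ∈ ℝ^d` and a positive definite `Σ_0`, with
`Σ_k = Σ_0 + ∑_{i=1}^k x_i x_iᵀ` (here `G k` plays the role of `Σ_k`),
one has for every `k ≤ K`:
`∑_{i=1}^k min{1, x_iᵀ Σ_{i-1}⁻¹ x_i} ≤ 2 log(det Σ_k / det Σ_0)`;
moreover, if `‖x_i‖₂ ≤ L` for all `i ∈ [K]`, then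
`∑_{i=1}^k min{1, x_iᵀ Σ_{i-1}⁻¹ x_i} ≤ 2 (d log((trace Σ_0 + k L²)/d) − log det Σ_0)`. -/
theorem stmt_1 {d K : ℕ} (x : ℕ → Fin d → ℝ) (G0 : Matrix (Fin d) (Fin d) ℝ)
    (hG0 : G0.PosDef)
    (G : ℕ → Matrix (Fin d) (Fin d) ℝ)
    (hG : ∀ k, G k = G0 + ∑ i ∈ Finset.Icc 1 k, Matrix.vecMulVec (x i) (x i)) :
    (∀ k ≤ K, ∑ i ∈ Finset.Icc 1 k, min 1 (x i ⬝ᵥ ((G (i - 1))⁻¹).mulVec (x i))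
        ≤ 2 * Real.log ((G k).det / G0.det)) ∧
    (∀ L : ℝ, (∀ i ∈ Finset.Icc 1 K, Real.sqrt (∑ j, x i j ^ 2) ≤ L) →
      ∀ k ≤ K, ∑ i ∈ Finset.Icc 1 k, min 1 (x i ⬝ᵥ ((G (i - 1))⁻¹).mulVec (x i))
        ≤ 2 * ((d : ℝ) * Real.log ((G0.trace + k * L ^ 2) / d) - Real.log G0.det)) := by
  have hPD : ∀ k, (G k).PosDef := by
    intro k
    rw [hG k]
    refine hG0.add_posSemidef ?_
    refine Finset.sum_induction _ _ (fun a b ha hb => ha.add hb) ?_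
      (fun i _ => my_psd_vecMulVec (x i))
    exact Matrix.PosSemidef.zero
  have hdetpos : ∀ k, 0 < (G k).det := fun k => (hPD k).det_pos
  have ht : ∀ i : ℕ, 0 ≤ x i ⬝ᵥ ((G (i - 1))⁻¹).mulVec (x i) := by
    intro i
    have h := ((hPD (i - 1)).inv).posSemidef.dotProduct_mulVec_nonneg (x i)
    simpa using h
  have hstep : ∀ j : ℕ, (G (j + 1)).det
      = (G j).det * (1 + x (j + 1) ⬝ᵥ ((G j)⁻¹).mulVec (x (j + 1))) := by
    intro j
    have h1 : G (j + 1) = G j + Matrix.vecMulVec (x (j + 1)) (x (j + 1)) := by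
      rw [hG, hG, Finset.sum_Icc_succ_top (Nat.succ_le_succ (Nat.zero_le j)), ← add_assoc]
    rw [h1, Matrix.vecMulVec_eq (Fin 1),
      Matrix.det_add_replicateCol_mul_replicateRow (isUnit_iff_ne_zero.mpr (hdetpos j).ne')]
    congr 1
    have hd1 : ((1 : Matrix (Fin 1) (Fin 1) ℝ) + Matrix.replicateRow (Fin 1) (x (j+1)) * (G j)⁻¹
        * Matrix.replicateCol (Fin 1) (x (j+1))).det = 1 + x (j + 1) ⬝ᵥ (G j)⁻¹ *ᵥ x (j + 1) := by
      rw [Matrix.det_unique]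
      simp only [Matrix.add_apply, Matrix.one_apply_eq, Matrix.mul_apply, Matrix.replicateRow_apply,
        Matrix.replicateCol_apply]
      rw [my_row_mul_col]
    convert hd1 using 2
    congr!
  have part1 : ∀ k : ℕ, ∑ i ∈ Finset.Icc 1 k, min 1 (x i ⬝ᵥ ((G (i - 1))⁻¹).mulVec (x i))
      ≤ 2 * Real.log ((G k).det / G0.det) := by
    intro k
    induction k with
    | zero =>
      have h0 : G 0 = G0 := by rw [hG]; simp
      simp [h0, div_self hG0.det_pos.ne']
    | succ j ih =>
      rw [Finset.sum_Icc_succ_top (Nat.succ_le_succ (Nat.zero_le j))]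
      simp only [Nat.add_sub_cancel]
      have htj := ht (j + 1)
      simp only [Nat.add_sub_cancel] at htj
      have hlog : Real.log ((G (j + 1)).det / G0.det)
          = Real.log ((G j).det / G0.det)
            + Real.log (1 + x (j + 1) ⬝ᵥ ((G j)⁻¹).mulVec (x (j + 1))) := by
        rw [hstep j, mul_div_right_comm,
          Real.log_mul (div_pos (hdetpos j) hG0.det_pos).ne' (by linarith)]
      have hmin := my_min_le_log htj
      linarith
  refine ⟨fun k _ => part1 k, ?_⟩
  intro L hL k hk
  rcases Nat.eq_zero_or_pos d with hd | hd
  · subst hd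
    have h0 : ∀ i : ℕ, x i ⬝ᵥ ((G (i - 1))⁻¹).mulVec (x i) = 0 := fun i => by
      simp [dotProduct]
    have hdet0 : G0.det = 1 := Matrix.det_isEmpty
    simp [h0, hdet0]
  · have hd' : (0 : ℝ) < d := by exact_mod_cast hd
    have h1 := part1 k
    have h2 : Real.log ((G k).det / G0.det)
        = Real.log (G k).det - Real.log G0.det :=
      Real.log_div (hdetpos k).ne' hG0.det_pos.ne'
    have h3 := my_log_det_le (hPD k)
    have htrace : (G k).trace ≤ G0.trace + (k : ℝ) * L ^ 2 := by
      have hGk : (G k).trace = G0.trace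
          + ∑ i ∈ Finset.Icc 1 k, (∑ j, x i j ^ 2) := by
        rw [hG k, Matrix.trace_add, Matrix.trace_sum]
        congr 1
        refine Finset.sum_congr rfl fun i _ => ?_
        simp [Matrix.trace, Matrix.diag, Matrix.vecMulVec_apply, sq]
      rw [hGk]
      have hbound : ∀ i ∈ Finset.Icc 1 k, (∑ j, x i j ^ 2) ≤ L ^ 2 := by
        intro i hi
        have hiK : i ∈ Finset.Icc 1 K := Finset.Icc_subset_Icc_right hk hi
        have hs := hL i hiK
        have hnn : (0:ℝ) ≤ ∑ j, x i j ^ 2 := by positivity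
        have hsq : Real.sqrt (∑ j, x i j ^ 2) ^ 2 = ∑ j, x i j ^ 2 := Real.sq_sqrt hnn
        nlinarith [Real.sqrt_nonneg (∑ j, x i j ^ 2)]
      have := Finset.sum_le_card_nsmul _ _ (L ^ 2) hbound
      rw [Nat.card_Icc] at this
      simp only [Nat.add_sub_cancel, nsmul_eq_mul] at this
      linarith
    have htrpos : (0 : ℝ) < (G k).trace := by
      rw [my_trace_eq (hPD k).isHermitian]
      refine Finset.sum_pos (fun i _ => (hPD k).eigenvalues_pos i) ?_
      exact Finset.univ_nonempty_iff.mpr ⟨⟨0, hd⟩⟩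
    have h4 : Real.log ((G k).trace / d) ≤ Real.log ((G0.trace + (k:ℝ) * L ^ 2) / d) := by
      apply Real.log_le_log (div_pos htrpos hd')
      gcongr
    have h5 : (d : ℝ) * Real.log ((G k).trace / d)
        ≤ (d : ℝ) * Real.log ((G0.trace + (k:ℝ) * L ^ 2) / d) :=
      mul_le_mul_of_nonneg_left h4 hd'.le
    rw [h2] at h1
    linarith
end

section
/- Let {σ_k}_{k≥1} be a sequence of non-negative numbers, α, γ > 0, λ > 0, and let {a_k}_{k≥1} ⊂ R^d satisfy ‖a_k‖_2 ≤ A for all k. Define recursively Σ̂_1 = λ I_d, σ̄_k = max{σ_k, α, γ ‖a_k‖_{Σ̂_k^{−1}}^{1/2}}, and Σ̂_{k+1} = Σ̂_k + a_k a_kᵀ / σ̄_k². Let ι = log(1 + K A²/(d λ α²)). Then Σ_{k=1}^{K} min{1, ‖a_k‖_{Σ̂_k^{−1}}} ≤ 2 d ι + 2 γ² d ι + 2 √(d ι) · √( Σ_{k=1}^{K} (σ_k² + α²) ). -/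
open scoped Matrix
open Finset

section AuxLemmas

/-- `min 1 x ≤ 2 log (1+x)` for nonnegative `x`. -/
lemma aux_min_le_log {x : ℝ} (hx : 0 ≤ x) : min 1 x ≤ 2 * Real.log (1 + x) := by
  rcases le_or_gt 1 x with h | h
  · rw [min_eq_left h]
    have hlog2 : (1:ℝ)/2 < Real.log 2 := by
      rw [Real.lt_log_iff_exp_lt (by norm_num)]
      have h1 : Real.exp (1/2) * Real.exp (1/2) = Real.exp 1 := by
        rw [← Real.exp_add]; norm_num
      nlinarith [Real.exp_one_lt_d9, Real.exp_pos (1/2:ℝ)]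
    have : Real.log 2 ≤ Real.log (1 + x) := by
      apply Real.log_le_log (by norm_num); linarith
    linarith
  · have hmin : min 1 x ≤ x := min_le_right _ _
    have key : x / 2 ≤ Real.log (1 + x) := by
      rw [Real.le_log_iff_exp_le (by linarith)]
      have h1 : (-(x/2)) + 1 ≤ Real.exp (-(x/2)) := Real.add_one_le_exp _
      have h2 : Real.exp (-(x/2)) = (Real.exp (x/2))⁻¹ := Real.exp_neg _
      have hE : 0 < Real.exp (x/2) := Real.exp_pos _
      rw [h2] at h1
      have h3 : Real.exp (x/2) * (1 - x/2) ≤ 1 := by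
        have := mul_le_mul_of_nonneg_left h1 hE.le
        rw [mul_inv_cancel₀ hE.ne'] at this
        linarith [this]
      nlinarith
    linarith

/-- AM–GM: the product is at most the `n`-th power of the average. -/
lemma aux_prod_le {n : ℕ} (hn : 0 < n) (f : Fin n → ℝ) (hf : ∀ i, 0 ≤ f i) :
    ∏ i, f i ≤ ((∑ i, f i) / n) ^ n := by
  have hn' : (0:ℝ) < n := by exact_mod_cast hn
  have h := Real.geom_mean_le_arith_mean_weighted Finset.univ (fun _ => (1:ℝ)/n) f
    (fun i _ => by positivity) (by simp; field_simp) (fun i _ => hf i)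
  have h2 : ∏ i, f i ^ ((1:ℝ)/n) = (∏ i, f i) ^ ((1:ℝ)/n) := by
    rw [← Real.finset_prod_rpow _ _ (fun i _ => hf i)]
  have hsum : ∑ i, (1:ℝ)/n * f i = (∑ i, f i) / n := by
    rw [← Finset.mul_sum]; ring
  rw [h2, hsum] at h
  have hP : 0 ≤ ∏ i, f i := Finset.prod_nonneg (fun i _ => hf i)
  have h3 : ((∏ i, f i) ^ ((1:ℝ)/n)) ^ n ≤ ((∑ i, f i) / n) ^ n :=
    pow_le_pow_left₀ (Real.rpow_nonneg hP _) h n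
  calc ∏ i, f i = ((∏ i, f i) ^ ((1:ℝ)/n)) ^ n := by
        rw [← Real.rpow_natCast ((∏ i, f i) ^ ((1:ℝ)/n)) n, ← Real.rpow_mul hP]
        field_simp
        simp
    _ ≤ _ := h3

/-- Pointwise decomposition used in the elliptical potential argument. -/
lemma aux_ptwise {w s alpha gam : ℝ} (hw : 0 ≤ w) (hs : 0 ≤ s) (halpha : 0 < alpha)
    (hgam : 0 < gam) :
    min 1 w ≤ (1 + gam^2) * min 1 (w^2 / (max s (max alpha (gam * Real.sqrt w)))^2)
      + min (max s (max alpha (gam * Real.sqrt w))) (Real.sqrt (s^2 + alpha^2))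
          * min 1 (w / max s (max alpha (gam * Real.sqrt w))) := by
  set g := gam * Real.sqrt w with hg
  set b := max s (max alpha g) with hb
  have hg0 : 0 ≤ g := mul_nonneg hgam.le (Real.sqrt_nonneg _)
  have hbpos : 0 < b := lt_of_lt_of_le halpha (le_max_of_le_right (le_max_left _ _))
  have hmin1 : 0 ≤ min 1 (w^2 / b^2) := le_min (by norm_num) (by positivity)
  have hmin2 : 0 ≤ min 1 (w / b) := le_min (by norm_num) (by positivity)
  have hc0 : 0 ≤ min b (Real.sqrt (s^2 + alpha^2)) :=
    le_min hbpos.le (Real.sqrt_nonneg _)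
  rcases le_total g (max s alpha) with h | h
  · have hb' : b = max s alpha := by
      rw [hb, ← max_assoc, max_eq_left h]
    have hble : b ≤ Real.sqrt (s^2 + alpha^2) := by
      rw [hb']
      apply max_le
      · calc s = Real.sqrt (s^2) := (Real.sqrt_sq hs).symm
          _ ≤ _ := Real.sqrt_le_sqrt (by nlinarith)
      · calc alpha = Real.sqrt (alpha^2) := (Real.sqrt_sq halpha.le).symm
          _ ≤ _ := Real.sqrt_le_sqrt (by nlinarith)
    rw [min_eq_left hble]
    rcases le_total b w with h2 | h2
    · have : min 1 (w^2 / b^2) = 1 := by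
        rw [min_eq_left]
        rw [le_div_iff₀ (by positivity), one_mul]
        nlinarith
      rw [this]
      have : min 1 w ≤ 1 := min_le_left _ _
      nlinarith [mul_nonneg hbpos.le hmin2]
    · have h3 : min 1 (w / b) = w / b := by
        rw [min_eq_right]
        rw [div_le_one hbpos]; exact h2
      rw [h3]
      have h4 : b * (w / b) = w := by field_simp
      have : min 1 w ≤ w := min_le_right _ _
      nlinarith [mul_nonneg (by positivity : (0:ℝ) ≤ 1 + gam^2) hmin1]
  · have hb' : b = g := by
      rw [hb, ← max_assoc, max_eq_right h]
    have hwpos : 0 < w := by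
      by_contra hneg
      push_neg at hneg
      have : w = 0 := le_antisymm hneg hw
      rw [this, Real.sqrt_zero, mul_zero] at hg
      have := hbpos; rw [hb', hg] at this; exact lt_irrefl _ this
    have hbsq : b^2 = gam^2 * w := by
      rw [hb', hg, mul_pow, Real.sq_sqrt hw]
    have hw2 : w^2 / b^2 = w / gam^2 := by
      rw [hbsq]; field_simp
    rw [hw2]
    rcases le_total (gam^2) w with h2 | h2
    · have : min 1 (w / gam^2) = 1 := by
        rw [min_eq_left]; rw [le_div_iff₀ (by positivity), one_mul]; exact h2
      rw [this]
      have : min 1 w ≤ 1 := min_le_left _ _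
      nlinarith [mul_nonneg hc0 hmin2]
    · have : min 1 (w / gam^2) = w / gam^2 := by
        rw [min_eq_right]; rw [div_le_one (by positivity)]; exact h2
      rw [this]
      have h5 : (1 + gam^2) * (w / gam^2) ≥ w := by
        rw [ge_iff_le, ← sub_nonneg]
        have : (1 + gam^2) * (w / gam^2) - w = w / gam^2 := by field_simp; ring
        rw [this]; positivity
      have : min 1 w ≤ w := min_le_right _ _
      nlinarith [mul_nonneg hc0 hmin2]

variable {d : ℕ}

lemma aux_qf_nonneg {M : Matrix (Fin d) (Fin d) ℝ} (hM : M.PosSemidef) (x : Fin d → ℝ) :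
    0 ≤ x ⬝ᵥ M *ᵥ x := by
  have := hM.dotProduct_mulVec_nonneg x
  simpa using this

lemma aux_vmv_psd (v : Fin d → ℝ) : (Matrix.vecMulVec v v).PosSemidef := by
  refine Matrix.PosSemidef.of_dotProduct_mulVec_nonneg ?_ ?_
  · ext i j
    simp [Matrix.vecMulVec_apply, Matrix.conjTranspose_apply, mul_comm]
  · intro x
    have : x ⬝ᵥ (Matrix.vecMulVec v v) *ᵥ x = (v ⬝ᵥ x) * (v ⬝ᵥ x) := by
      simp only [dotProduct, Matrix.mulVec, Matrix.vecMulVec_apply]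
      rw [Finset.sum_mul]
      apply Finset.sum_congr rfl
      intro i _
      rw [Finset.mul_sum, Finset.mul_sum]
      apply Finset.sum_congr rfl
      intro j _
      ring
    simpa [this] using mul_self_nonneg (v ⬝ᵥ x)

lemma aux_smul_psd {M : Matrix (Fin d) (Fin d) ℝ} (hM : M.PosSemidef) {c : ℝ} (hc : 0 ≤ c) :
    (c • M).PosSemidef := by
  refine Matrix.PosSemidef.of_dotProduct_mulVec_nonneg ?_ ?_
  · ext i j
    have := hM.1
    rw [Matrix.IsHermitian] at this
    simp [Matrix.conjTranspose_apply, Matrix.smul_apply]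
    nth_rewrite 2 [← this]
    simp [Matrix.conjTranspose_apply]
  · intro x
    have h := hM.dotProduct_mulVec_nonneg x
    simp only [Matrix.smul_mulVec, dotProduct_smul, smul_eq_mul] at *
    exact mul_nonneg hc (by simpa using h)

lemma aux_trace_vmv (v : Fin d → ℝ) : (Matrix.vecMulVec v v).trace = ∑ i, v i ^ 2 := by
  simp [Matrix.trace, Matrix.diag, Matrix.vecMulVec_apply, sq]

/-- Matrix determinant lemma for a rank-one update of a positive definite matrix. -/
lemma aux_det_rank_one {M : Matrix (Fin d) (Fin d) ℝ} (hM : M.PosDef) (v : Fin d → ℝ) (c : ℝ) :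
    (M + c • Matrix.vecMulVec v v).det = M.det * (1 + c * (v ⬝ᵥ M⁻¹ *ᵥ v)) := by
  have h1 : c • Matrix.vecMulVec v v = Matrix.replicateCol Unit (c • v) * Matrix.replicateRow Unit v := by
    rw [← Matrix.vecMulVec_eq]
    ext i j
    simp [Matrix.vecMulVec_apply, mul_assoc]
  have hdet : IsUnit M.det := hM.det_pos.ne'.isUnit
  rw [h1, Matrix.det_add_replicateCol_mul_replicateRow hdet]
  congr 1
  rw [Matrix.det_unique]
  simp only [Matrix.add_apply, Matrix.one_apply_eq]
  congr 1
  have : Matrix.replicateRow Unit v * M⁻¹ * Matrix.replicateCol Unit (c • v)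
      = Matrix.replicateRow Unit v * (M⁻¹ * Matrix.replicateCol Unit (c • v)) := by rw [Matrix.mul_assoc]
  rw [this]
  simp only [Matrix.mul_apply, Matrix.replicateRow_apply, Matrix.replicateCol_apply]
  rw [Matrix.dotProduct_mulVec]
  simp [Matrix.vecMul, dotProduct, Matrix.mulVec, Finset.mul_sum, Pi.smul_apply,
    smul_eq_mul]
  rw [Finset.sum_comm]
  apply Finset.sum_congr rfl
  intro i _
  rw [Finset.sum_mul, Finset.mul_sum]
  apply Finset.sum_congr rfl
  intro j _
  ring

lemma aux_trace_eq_sum_eig {M : Matrix (Fin d) (Fin d) ℝ} (hM : M.IsHermitian) :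
    M.trace = ∑ i, hM.eigenvalues i := by
  rw [hM.trace_eq_sum_eigenvalues]
  simp

lemma aux_trace_nonneg {M : Matrix (Fin d) (Fin d) ℝ} (hM : M.PosSemidef) :
    0 ≤ M.trace := by
  rw [aux_trace_eq_sum_eig hM.isHermitian]
  exact Finset.sum_nonneg fun i _ => hM.eigenvalues_nonneg i

/-- AM–GM for determinants: `det M ≤ (trace M / d) ^ d` for `M` positive semidefinite. -/
lemma aux_det_le_trace (hd : 0 < d) {M : Matrix (Fin d) (Fin d) ℝ}
    (hM : M.PosSemidef) : M.det ≤ (M.trace / d) ^ d := by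
  have hH := hM.isHermitian
  have hdet : M.det = ∏ i, hH.eigenvalues i := by
    rw [hH.det_eq_prod_eigenvalues]; norm_num
  rw [hdet, aux_trace_eq_sum_eig hH]
  exact aux_prod_le hd _ (fun i => hM.eigenvalues_nonneg i)

end AuxLemmas

lemma aux_min_sq {t : ℝ} (ht : 0 ≤ t) : (min 1 t) ^ 2 = min 1 (t ^ 2) := by
  rcases le_total t 1 with h | h
  · rw [min_eq_right h, min_eq_right (by nlinarith)]
  · rw [min_eq_left h, min_eq_left (by nlinarith)]
    norm_num

lemma aux_main {d K : ℕ} (hd : 0 < d) (σ : ℕ → ℝ) (hσ : ∀ k, 0 ≤ σ k)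
    (α γ lam A : ℝ) (hα : 0 < α) (hγ : 0 < γ) (hlam : 0 < lam)
    (a : ℕ → Fin d → ℝ) (hA : ∀ k, Real.sqrt (∑ j, a k j ^ 2) ≤ A)
    (Gh : ℕ → Matrix (Fin d) (Fin d) ℝ) (σb u : ℕ → ℝ)
    (hu : ∀ k, 1 ≤ k → u k = a k ⬝ᵥ (Gh k)⁻¹ *ᵥ a k)
    (hG1 : Gh 1 = lam • (1 : Matrix (Fin d) (Fin d) ℝ))
    (hσb : ∀ k ≥ 1, σb k = max (σ k) (max α (γ * Real.sqrt (Real.sqrt (u k)))))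
    (hrec : ∀ k ≥ 1, Gh (k + 1) = Gh k + ((σb k) ^ 2)⁻¹ • Matrix.vecMulVec (a k) (a k))
    (ι : ℝ) (hι : ι = Real.log (1 + K * A ^ 2 / (d * lam * α ^ 2))) :
    ∑ k ∈ Finset.Icc 1 K, min 1 (Real.sqrt (u k))
      ≤ 2 * d * ι + 2 * γ ^ 2 * d * ι
        + 2 * Real.sqrt (d * ι) * Real.sqrt (∑ k ∈ Finset.Icc 1 K, (σ k ^ 2 + α ^ 2)) := by
  have hd' : (0:ℝ) < d := by exact_mod_cast hd
  have hA0 : 0 ≤ A := le_trans (Real.sqrt_nonneg _) (hA 0)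
  have hA2 : ∀ k, ∑ j, a k j ^ 2 ≤ A ^ 2 := by
    intro k
    have h := hA k
    have hnn : 0 ≤ ∑ j, a k j ^ 2 := by positivity
    nlinarith [Real.sq_sqrt hnn, Real.sqrt_nonneg (∑ j, a k j ^ 2)]
  have hσbα : ∀ k, 1 ≤ k → α ≤ σb k := by
    intro k hk; rw [hσb k hk]; exact le_max_of_le_right (le_max_left _ _)
  have hσbpos : ∀ k, 1 ≤ k → 0 < σb k := fun k hk => lt_of_lt_of_le hα (hσbα k hk)
  have hpd : ∀ k, 1 ≤ k → (Gh k).PosDef := by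
    intro k hk
    induction k, hk using Nat.le_induction with
    | base =>
      rw [hG1, Matrix.smul_one_eq_diagonal]
      exact (Matrix.posDef_diagonal_iff).mpr (fun _ => hlam)
    | succ n hn ih =>
      rw [hrec n hn]
      exact ih.add_posSemidef (aux_smul_psd (aux_vmv_psd _) (by positivity))
  have hu0 : ∀ k, 1 ≤ k → 0 ≤ u k := fun k hk =>
    (hu k hk) ▸ aux_qf_nonneg ((hpd k hk).inv.posSemidef) _
  -- determinant product formula
  have hdetprod : ∀ n : ℕ,
      (Gh (n+1)).det = lam ^ d * ∏ k ∈ Finset.Icc 1 n, (1 + u k / σb k ^ 2) := by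
    intro n
    induction n with
    | zero =>
      rw [show (0:ℕ)+1 = 1 from rfl, hG1, Matrix.det_smul]
      simp
    | succ n ih =>
      rw [hrec (n+1) (by omega), aux_det_rank_one (hpd (n+1) (by omega)),
        ih, Finset.prod_Icc_succ_top (by omega), ← hu (n+1) (by omega)]
      rw [inv_mul_eq_div]
      ring
  -- trace bound
  have htr : ∀ n : ℕ, (Gh (n+1)).trace ≤ d * lam + n * (A ^ 2 / α ^ 2) := by
    intro n
    induction n with
    | zero =>
      rw [show (0:ℕ)+1 = 1 from rfl, hG1, Matrix.trace_smul, Matrix.trace_one]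
      simp [smul_eq_mul]
      ring_nf
      norm_num [mul_comm]
    | succ n ih =>
      rw [hrec (n+1) (by omega), Matrix.trace_add, Matrix.trace_smul, aux_trace_vmv]
      have h1 : ((σb (n+1)) ^ 2)⁻¹ • (∑ j, a (n+1) j ^ 2) ≤ A ^ 2 / α ^ 2 := by
        rw [smul_eq_mul]
        have hs1 := hσbα (n+1) (by omega)
        have h2 : ((σb (n+1)) ^ 2)⁻¹ ≤ (α ^ 2)⁻¹ := by
          apply inv_anti₀ (by positivity)
          nlinarith
        calc ((σb (n+1)) ^ 2)⁻¹ * (∑ j, a (n+1) j ^ 2) ≤ (α ^ 2)⁻¹ * A ^ 2 :=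
              mul_le_mul h2 (hA2 (n+1)) (by positivity) (by positivity)
          _ = A ^ 2 / α ^ 2 := by ring
      push_cast
      linarith
  -- the key elliptical potential bound
  have hfac : ∀ k ∈ Finset.Icc 1 K, (0:ℝ) < 1 + u k / σb k ^ 2 := by
    intro k hk
    have hk1 : 1 ≤ k := (Finset.mem_Icc.mp hk).1
    have := hu0 k hk1
    have := hσbpos k hk1
    positivity
  have key : ∑ k ∈ Finset.Icc 1 K, min 1 (u k / σb k ^ 2) ≤ 2 * d * ι := by
    have step1 : ∑ k ∈ Finset.Icc 1 K, min 1 (u k / σb k ^ 2)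
        ≤ ∑ k ∈ Finset.Icc 1 K, 2 * Real.log (1 + u k / σb k ^ 2) := by
      apply Finset.sum_le_sum
      intro k hk
      have hk1 : 1 ≤ k := (Finset.mem_Icc.mp hk).1
      exact aux_min_le_log (div_nonneg (hu0 k hk1) (by positivity))
    have step2 : ∑ k ∈ Finset.Icc 1 K, 2 * Real.log (1 + u k / σb k ^ 2)
        = 2 * Real.log (∏ k ∈ Finset.Icc 1 K, (1 + u k / σb k ^ 2)) := by
      rw [Real.log_prod (fun k hk => (hfac k hk).ne'), ← Finset.mul_sum]
    obtain ⟨R, hR⟩ : ∃ R : ℝ, R = lam + K * (A ^ 2 / α ^ 2) / d := ⟨_, rfl⟩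
    have hR0 : 0 < R := by rw [hR]; positivity
    have hdetpos : 0 < (Gh (K+1)).det := (hpd (K+1) (by omega)).det_pos
    have step3 : ∏ k ∈ Finset.Icc 1 K, (1 + u k / σb k ^ 2)
        = (Gh (K+1)).det / lam ^ d := by
      rw [hdetprod K]
      field_simp
    have step4 : (Gh (K+1)).det ≤ R ^ d := by
      have hpsd := (hpd (K+1) (by omega)).posSemidef
      have h5 := aux_det_le_trace hd hpsd
      have h6 : (Gh (K+1)).trace / d ≤ R := by
        rw [div_le_iff₀ hd']
        have h7 := htr K
        have hRd : R * d = d * lam + K * (A ^ 2 / α ^ 2) := by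
          rw [hR]; field_simp
        rw [hRd]
        exact h7
      calc (Gh (K+1)).det ≤ ((Gh (K+1)).trace / d) ^ d := h5
        _ ≤ R ^ d := pow_le_pow_left₀ (div_nonneg (aux_trace_nonneg hpsd) hd'.le) h6 d
    have step5 : Real.log ((Gh (K+1)).det) ≤ d * Real.log R := by
      calc Real.log ((Gh (K+1)).det) ≤ Real.log (R ^ d) :=
            Real.log_le_log hdetpos step4
        _ = d * Real.log R := by rw [Real.log_pow]
    have hiota : Real.log R - Real.log lam = ι := by
      rw [hι, ← Real.log_div hR0.ne' hlam.ne']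
      congr 1
      rw [hR]
      field_simp
    calc ∑ k ∈ Finset.Icc 1 K, min 1 (u k / σb k ^ 2)
        ≤ 2 * Real.log ((Gh (K+1)).det / lam ^ d) := by rw [← step3, ← step2]; exact step1
      _ = 2 * (Real.log ((Gh (K+1)).det) - d * Real.log lam) := by
          rw [Real.log_div hdetpos.ne' (by positivity), Real.log_pow]
      _ ≤ 2 * (d * Real.log R - d * Real.log lam) := by linarith
      _ = 2 * d * (Real.log R - Real.log lam) := by ring
      _ = 2 * d * ι := by rw [hiota]
  -- pointwise decomposition
  have hptw : ∀ k ∈ Finset.Icc 1 K, min 1 (Real.sqrt (u k))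
      ≤ (1 + γ ^ 2) * min 1 (u k / σb k ^ 2)
        + min (σb k) (Real.sqrt (σ k ^ 2 + α ^ 2)) * min 1 (Real.sqrt (u k) / σb k) := by
    intro k hk
    have hk1 : 1 ≤ k := (Finset.mem_Icc.mp hk).1
    have h := aux_ptwise (Real.sqrt_nonneg (u k)) (hσ k) hα hγ
    rw [Real.sq_sqrt (hu0 k hk1)] at h
    rw [hσb k hk1]
    exact h
  have hsum1 : ∑ k ∈ Finset.Icc 1 K, min 1 (Real.sqrt (u k))
      ≤ (1 + γ ^ 2) * (∑ k ∈ Finset.Icc 1 K, min 1 (u k / σb k ^ 2))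
        + ∑ k ∈ Finset.Icc 1 K,
            min (σb k) (Real.sqrt (σ k ^ 2 + α ^ 2)) * min 1 (Real.sqrt (u k) / σb k) := by
    rw [Finset.mul_sum, ← Finset.sum_add_distrib]
    exact Finset.sum_le_sum hptw
  -- Cauchy–Schwarz on the second sum
  have hCS : ∑ k ∈ Finset.Icc 1 K,
        min (σb k) (Real.sqrt (σ k ^ 2 + α ^ 2)) * min 1 (Real.sqrt (u k) / σb k)
      ≤ Real.sqrt (∑ k ∈ Finset.Icc 1 K, (σ k ^ 2 + α ^ 2))
          * Real.sqrt (2 * (d * ι)) := by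
    have h1 := Real.sum_mul_le_sqrt_mul_sqrt (Finset.Icc 1 K)
      (fun k => min (σb k) (Real.sqrt (σ k ^ 2 + α ^ 2)))
      (fun k => min 1 (Real.sqrt (u k) / σb k))
    have h2 : ∑ k ∈ Finset.Icc 1 K, (min (σb k) (Real.sqrt (σ k ^ 2 + α ^ 2))) ^ 2
        ≤ ∑ k ∈ Finset.Icc 1 K, (σ k ^ 2 + α ^ 2) := by
      apply Finset.sum_le_sum
      intro k hk
      have hk1 : 1 ≤ k := (Finset.mem_Icc.mp hk).1
      have hc0 : 0 ≤ min (σb k) (Real.sqrt (σ k ^ 2 + α ^ 2)) :=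
        le_min (hσbpos k hk1).le (Real.sqrt_nonneg _)
      have hcle : min (σb k) (Real.sqrt (σ k ^ 2 + α ^ 2)) ≤ Real.sqrt (σ k ^ 2 + α ^ 2) :=
        min_le_right _ _
      nlinarith [Real.sq_sqrt (by positivity : (0:ℝ) ≤ σ k ^ 2 + α ^ 2)]
    have h3 : ∑ k ∈ Finset.Icc 1 K, (min 1 (Real.sqrt (u k) / σb k)) ^ 2
        ≤ 2 * (d * ι) := by
      have heq : ∀ k ∈ Finset.Icc 1 K,
          (min 1 (Real.sqrt (u k) / σb k)) ^ 2 = min 1 (u k / σb k ^ 2) := by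
        intro k hk
        have hk1 : 1 ≤ k := (Finset.mem_Icc.mp hk).1
        rw [aux_min_sq (div_nonneg (Real.sqrt_nonneg _) (hσbpos k hk1).le), div_pow,
          Real.sq_sqrt (hu0 k hk1)]
      rw [Finset.sum_congr rfl heq]
      calc ∑ k ∈ Finset.Icc 1 K, min 1 (u k / σb k ^ 2) ≤ 2 * d * ι := key
        _ = 2 * (d * ι) := by ring
    calc ∑ k ∈ Finset.Icc 1 K,
          min (σb k) (Real.sqrt (σ k ^ 2 + α ^ 2)) * min 1 (Real.sqrt (u k) / σb k)
        ≤ Real.sqrt (∑ k ∈ Finset.Icc 1 K, (min (σb k) (Real.sqrt (σ k ^ 2 + α ^ 2))) ^ 2)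
            * Real.sqrt (∑ k ∈ Finset.Icc 1 K, (min 1 (Real.sqrt (u k) / σb k)) ^ 2) := h1
      _ ≤ _ :=
          mul_le_mul (Real.sqrt_le_sqrt h2) (Real.sqrt_le_sqrt h3) (Real.sqrt_nonneg _)
            (Real.sqrt_nonneg _)
  have hsqrt2 : Real.sqrt (2 * (d * ι)) ≤ 2 * Real.sqrt (d * ι) := by
    rw [Real.sqrt_mul (by norm_num : (0:ℝ) ≤ 2)]
    have h2 : Real.sqrt 2 ≤ 2 := by
      nlinarith [Real.sq_sqrt (by norm_num : (0:ℝ) ≤ 2), Real.sqrt_nonneg 2]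
    have := Real.sqrt_nonneg ((d:ℝ) * ι)
    nlinarith
  have hsq : 0 ≤ Real.sqrt (∑ k ∈ Finset.Icc 1 K, (σ k ^ 2 + α ^ 2)) := Real.sqrt_nonneg _
  calc ∑ k ∈ Finset.Icc 1 K, min 1 (Real.sqrt (u k))
      ≤ (1 + γ ^ 2) * (∑ k ∈ Finset.Icc 1 K, min 1 (u k / σb k ^ 2))
        + ∑ k ∈ Finset.Icc 1 K,
            min (σb k) (Real.sqrt (σ k ^ 2 + α ^ 2)) * min 1 (Real.sqrt (u k) / σb k) := hsum1
    _ ≤ (1 + γ ^ 2) * (2 * d * ι)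
        + Real.sqrt (∑ k ∈ Finset.Icc 1 K, (σ k ^ 2 + α ^ 2)) * (2 * Real.sqrt (d * ι)) := by
        have hle1 : (1 + γ ^ 2) * (∑ k ∈ Finset.Icc 1 K, min 1 (u k / σb k ^ 2))
            ≤ (1 + γ ^ 2) * (2 * d * ι) :=
          mul_le_mul_of_nonneg_left key (by positivity)
        have hle2 := hCS.trans (mul_le_mul_of_nonneg_left hsqrt2 hsq)
        linarith
    _ = 2 * d * ι + 2 * γ ^ 2 * d * ι
        + 2 * Real.sqrt (d * ι) * Real.sqrt (∑ k ∈ Finset.Icc 1 K, (σ k ^ 2 + α ^ 2)) := by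
        ring

/-- Lemma 4.4 of Zhou–Gu 2022.
Given nonnegative `σ_k`, constants `α, γ, λ > 0`, vectors `a_k` with `‖a_k‖₂ ≤ A`, and the
recursively defined `Σ̂_1 = λ I`, `σ̄_k = max{σ_k, α, γ ‖a_k‖_{Σ̂_k⁻¹}^{1/2}}`,
`Σ̂_{k+1} = Σ̂_k + a_k a_kᵀ / σ̄_k²`, and `ι = log(1 + K A²/(d λ α²))`, one has
`∑_{k=1}^K min{1, ‖a_k‖_{Σ̂_k⁻¹}} ≤ 2dι + 2γ²dι + 2√(dι) √(∑_{k=1}^K (σ_k² + α²))`. -/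
theorem stmt_2 {d K : ℕ} (σ : ℕ → ℝ) (hσ : ∀ k, 0 ≤ σ k)
    (α γ lam A : ℝ) (hα : 0 < α) (hγ : 0 < γ) (hlam : 0 < lam)
    (a : ℕ → Fin d → ℝ) (hA : ∀ k, Real.sqrt (∑ j, a k j ^ 2) ≤ A)
    (Gh : ℕ → Matrix (Fin d) (Fin d) ℝ) (σb : ℕ → ℝ)
    (hG1 : Gh 1 = lam • (1 : Matrix (Fin d) (Fin d) ℝ))
    (hσb : ∀ k ≥ 1, σb k =
      max (σ k) (max α (γ * Real.sqrt (Real.sqrt (a k ⬝ᵥ ((Gh k)⁻¹).mulVec (a k))))))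
    (hrec : ∀ k ≥ 1, Gh (k + 1) = Gh k + ((σb k) ^ 2)⁻¹ • Matrix.vecMulVec (a k) (a k))
    (ι : ℝ) (hι : ι = Real.log (1 + K * A ^ 2 / (d * lam * α ^ 2))) :
    ∑ k ∈ Finset.Icc 1 K, min 1 (Real.sqrt (a k ⬝ᵥ ((Gh k)⁻¹).mulVec (a k)))
      ≤ 2 * d * ι + 2 * γ ^ 2 * d * ι
        + 2 * Real.sqrt (d * ι) * Real.sqrt (∑ k ∈ Finset.Icc 1 K, (σ k ^ 2 + α ^ 2)) := by
  rcases Nat.eq_zero_or_pos d with hd | hd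
  · subst hd
    simp [dotProduct]
  · exact aux_main hd σ hσ α γ lam A hα hγ hlam a hA Gh σb
      (fun k => a k ⬝ᵥ (Gh k)⁻¹ *ᵥ a k) (fun k _ => rfl) hG1 hσb hrec ι hι
end

section
/- For LSVI-UCB++ run on a linear MDP, on the intersection of the concentration events E_1 and E_2, for every (s,a,h,k) ∈ S × A × [H] × [K]: Q_{k,h}(s,a) ≥ Q_h^*(s,a) ≥ Q̌_{k,h}(s,a) and V_{k,h}(s) ≥ V_h^*(s) ≥ V̌_{k,h}(s). -/
open Finset

/-- Expected value of `f` under the (discrete) transition distribution `P h (· | s, a)`: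
`(P_{s,a,h} f) = E_{s' ∼ P_h(·|s,a)} f(s')`. -/
noncomputable def Pexp {S A : Type*} (P : ℕ → S → A → S → ℝ) (h : ℕ) (s : S) (a : A)
    (f : S → ℝ) : ℝ := ∑' s', P h s a s' * f s'

/-- Value function `V_h^π` of a deterministic policy `π` in the episodic MDP `(P, r)` with
horizon `H`, defined by the Bellman equation with `V_{H+1}^π ≡ 0`. -/
noncomputable def Vpol {S A : Type*} (H : ℕ) (P : ℕ → S → A → S → ℝ)
    (r : ℕ → S → A → ℝ) (π : ℕ → S → A) : ℕ → S → ℝ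
  | h => fun s =>
    if _hh : h ≤ H then
      r h s (π h s) + Pexp P h s (π h s) (fun s' => Vpol H P r π (h + 1) s')
    else 0
  termination_by h => H + 1 - h
  decreasing_by omega

/-- Action-value function `Q_h^π` of a deterministic policy `π`. -/
noncomputable def Qpol {S A : Type*} (H : ℕ) (P : ℕ → S → A → S → ℝ)
    (r : ℕ → S → A → ℝ) (π : ℕ → S → A) (h : ℕ) (s : S) (a : A) : ℝ :=
  r h s a + Pexp P h s a (fun s' => Vpol H P r π (h + 1) s')

/-- Optimal value function `V_h^⋆`, via the Bellman optimality equation with `V_{H+1}^⋆ ≡ 0`. -/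
noncomputable def Vstar {S A : Type*} [Fintype A] [Nonempty A] (H : ℕ)
    (P : ℕ → S → A → S → ℝ) (r : ℕ → S → A → ℝ) : ℕ → S → ℝ
  | h => fun s =>
    if _hh : h ≤ H then
      ⨆ a, (r h s a + Pexp P h s a (fun s' => Vstar H P r (h + 1) s'))
    else 0
  termination_by h => H + 1 - h
  decreasing_by omega

/-- Optimal action-value function `Q_h^⋆`. -/
noncomputable def Qstar {S A : Type*} [Fintype A] [Nonempty A] (H : ℕ)
    (P : ℕ → S → A → S → ℝ) (r : ℕ → S → A → ℝ) (h : ℕ) (s : S) (a : A) : ℝ :=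
  r h s a + Pexp P h s a (fun s' => Vstar H P r (h + 1) s')

/-- Suboptimality gap `Δ_h(s,a) = V_h^⋆(s) − Q_h^⋆(s,a)`. -/
noncomputable def gapQ {S A : Type*} [Fintype A] [Nonempty A] (H : ℕ)
    (P : ℕ → S → A → S → ℝ) (r : ℕ → S → A → ℝ) (h : ℕ) (s : S) (a : A) : ℝ :=
  Vstar H P r h s - Qstar H P r h s a
open scoped Matrix
open Finset

/-- `(P, r)` together with features `φ` and measures `θ` forms a linear MDP with horizon `H`
and feature dimension `d`: transitions are probability kernels, rewards lie in `[0,1]`,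
`P_h(s'|s,a) = ⟨φ(s,a), θ_h(s')⟩`, `‖φ(s,a)‖₂ ≤ 1` and `‖θ_h(s')‖₂ ≤ √d`. -/
def IsLinearMDP {S A : Type*} (d H : ℕ) (P : ℕ → S → A → S → ℝ) (r : ℕ → S → A → ℝ)
    (φ : S → A → Fin d → ℝ) (θ : ℕ → S → Fin d → ℝ) : Prop :=
  (∀ h s a s', 0 ≤ P h s a s') ∧ (∀ h s a, HasSum (P h s a) 1) ∧
  (∀ h s a, r h s a ∈ Set.Icc (0 : ℝ) 1) ∧
  (∀ h ∈ Finset.Icc 1 H, ∀ s a s', P h s a s' = φ s a ⬝ᵥ θ h s') ∧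
  (∀ s a, Real.sqrt (∑ j, φ s a j ^ 2) ≤ 1) ∧
  (∀ h ∈ Finset.Icc 1 H, ∀ s', Real.sqrt (∑ j, θ h s' j ^ 2) ≤ Real.sqrt d)

/-- `Δmin` is the minimum gap: the infimum of the positive suboptimality gaps
`Δ_h(s,a) = V_h^⋆(s) − Q_h^⋆(s,a)`, assumed (non-degeneracy) to be positive. -/
noncomputable def IsMinGap {S A : Type*} [Fintype A] [Nonempty A] (H : ℕ)
    (P : ℕ → S → A → S → ℝ) (r : ℕ → S → A → ℝ) (Δmin : ℝ) : Prop :=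
  Δmin = sInf {x : ℝ | 0 < x ∧ ∃ s a, ∃ h ∈ Finset.Icc 1 H, gapQ H P r h s a = x} ∧
  0 < Δmin

/-- The data generated by a run of LSVI-UCB++ (Algorithm 1 of He et al. 2023) over `K`
episodes with horizon `H`, feature dimension `d`, feature map `φ`, regularization `lam` and
confidence radii `β`, `βb` (`= β̄`), `βt` (`= β̃`). -/
structure LSVIRun (S : Type*) (A : Type*) [Fintype A] [Nonempty A]
    (d H K : ℕ) (P : ℕ → S → A → S → ℝ) (r : ℕ → S → A → ℝ)
    (φ : S → A → Fin d → ℝ) (lam β βb βt : ℝ) where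
  /-- states `s_h^k` -/
  st : ℕ → ℕ → S
  /-- actions `a_h^k` -/
  ac : ℕ → ℕ → A
  /-- greedy policies `π^k` -/
  pol : ℕ → ℕ → S → A
  /-- optimistic estimates `Q_{k,h}` -/
  Qup : ℕ → ℕ → S → A → ℝ
  /-- pessimistic estimates `Q̌_{k,h}` -/
  Qlo : ℕ → ℕ → S → A → ℝ
  /-- Gram matrices `Σ_{k,h}` -/
  Sig : ℕ → ℕ → Matrix (Fin d) (Fin d) ℝ
  /-- weighted ridge estimates `ŵ_{k,h}` -/
  wha : ℕ → ℕ → Fin d → ℝ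
  /-- weighted ridge estimates `w̌_{k,h}` -/
  wch : ℕ → ℕ → Fin d → ℝ
  /-- weighted ridge estimates `w̃_{k,h}` (squared value targets) -/
  wti : ℕ → ℕ → Fin d → ℝ
  /-- estimated variances `σ_{k,h}²` -/
  sig2 : ℕ → ℕ → ℝ
  /-- adjusted estimated variances `σ̄_{k,h}²` -/
  sigb2 : ℕ → ℕ → ℝ
  /-- index `k_last` of the last policy-switch episode before episode `k` -/
  klast : ℕ → ℕ

namespace LSVIRun

variable {S A : Type*} [Fintype A] [Nonempty A] {d H K : ℕ}
  {P : ℕ → S → A → S → ℝ} {r : ℕ → S → A → ℝ} {φ : S → A → Fin d → ℝ}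
  {lam β βb βt : ℝ}

/-- optimistic value estimates `V_{k,h}(s) = max_a Q_{k,h}(s,a)` -/
noncomputable def V (R : LSVIRun S A d H K P r φ lam β βb βt) (k h : ℕ) (s : S) : ℝ :=
  ⨆ a, R.Qup k h s a

/-- pessimistic value estimates `V̌_{k,h}(s) = max_a Q̌_{k,h}(s,a)` -/
noncomputable def Vc (R : LSVIRun S A d H K P r φ lam β βb βt) (k h : ℕ) (s : S) : ℝ :=
  ⨆ a, R.Qlo k h s a

/-- the exploration bonus `‖φ(s,a)‖_{Σ_{k,h}⁻¹} = √(φ(s,a)ᵀ Σ_{k,h}⁻¹ φ(s,a))` -/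
noncomputable def bonus (R : LSVIRun S A d H K P r φ lam β βb βt) (k h : ℕ)
    (s : S) (a : A) : ℝ :=
  Real.sqrt (φ s a ⬝ᵥ ((R.Sig k h)⁻¹).mulVec (φ s a))

/-- the feature vector `φ(s_h^k, a_h^k)` -/
def feat (R : LSVIRun S A d H K P r φ lam β βb βt) (k h : ℕ) : Fin d → ℝ :=
  φ (R.st k h) (R.ac k h)

/-- variance-estimation correction term `E_{k,h}` -/
noncomputable def Ekh (R : LSVIRun S A d H K P r φ lam β βb βt) (k h : ℕ) : ℝ :=
  min (βt * R.bonus k h (R.st k h) (R.ac k h)) ((H : ℝ) ^ 2)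
  + min (2 * H * βb * R.bonus k h (R.st k h) (R.ac k h)) ((H : ℝ) ^ 2)

/-- variance-difference correction term `D_{k,h}` -/
noncomputable def Dkh (R : LSVIRun S A d H K P r φ lam β βb βt) (k h : ℕ) : ℝ :=
  min (4 * (d : ℝ) ^ 3 * H ^ 2 * ((R.wha k h - R.wch k h) ⬝ᵥ R.feat k h
      + 2 * βb * R.bonus k h (R.st k h) (R.ac k h))) ((d : ℝ) ^ 3 * H ^ 3)

/-- truncated plug-in variance estimate
`V̄_{s_h^k,a_h^k,h} V_{k,h+1} = [w̃ᵀφ]_{[0,H²]} − [(ŵᵀφ)²]_{[0,H²]}` -/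
noncomputable def varEst (R : LSVIRun S A d H K P r φ lam β βb βt) (k h : ℕ) : ℝ :=
  max 0 (min (R.wti k h ⬝ᵥ R.feat k h) ((H : ℝ) ^ 2))
  - max 0 (min ((R.wha k h ⬝ᵥ R.feat k h) ^ 2) ((H : ℝ) ^ 2))

/-- the policy-switch condition of episode `k`:
`det(Σ_{k,h'}) ≥ 2 det(Σ_{k_last,h'})` for some step `h'` -/
def updTrigger (R : LSVIRun S A d H K P r φ lam β βb βt) (k : ℕ) : Prop :=
  ∃ h' ∈ Finset.Icc 1 H, 2 * (R.Sig (R.klast k) h').det ≤ (R.Sig k h').det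

/-- `R` is a faithful run of LSVI-UCB++: all the defining equations of
Algorithm 1 of He et al. 2023 hold. -/
def ValidRun (R : LSVIRun S A d H K P r φ lam β βb βt) : Prop :=
  -- greedy action selection `a_h^k = argmax_a Q_{k,h}(s_h^k, a)`
  (∀ k h s, R.Qup k h s (R.pol k h s) = ⨆ a, R.Qup k h s a) ∧
  (∀ k h, R.ac k h = R.pol k h (R.st k h)) ∧
  -- initialization
  (∀ h s a, R.Qup 0 h s a = H) ∧
  (∀ h s a, R.Qlo 0 h s a = 0) ∧
  (∀ k s a, R.Qup k (H + 1) s a = 0) ∧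
  (∀ k s a, R.Qlo k (H + 1) s a = 0) ∧
  (∀ h, R.Sig 0 h = lam • (1 : Matrix (Fin d) (Fin d) ℝ)) ∧
  (∀ h, R.Sig 1 h = lam • (1 : Matrix (Fin d) (Fin d) ℝ)) ∧
  R.klast 1 = 0 ∧
  -- `k_last` bookkeeping
  (∀ k ∈ Finset.Icc 1 K,
    (R.updTrigger k → R.klast (k + 1) = k) ∧
    (¬ R.updTrigger k → R.klast (k + 1) = R.klast k)) ∧
  -- weighted ridge regression solutions
  (∀ k ∈ Finset.Icc 1 K, ∀ h ∈ Finset.Icc 1 H,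
    R.wha k h = ((R.Sig k h)⁻¹).mulVec
      (∑ i ∈ Finset.Icc 1 (k - 1),
        ((R.sigb2 i h)⁻¹ * R.V k (h + 1) (R.st i (h + 1))) • φ (R.st i h) (R.ac i h))) ∧
  (∀ k ∈ Finset.Icc 1 K, ∀ h ∈ Finset.Icc 1 H,
    R.wch k h = ((R.Sig k h)⁻¹).mulVec
      (∑ i ∈ Finset.Icc 1 (k - 1),
        ((R.sigb2 i h)⁻¹ * R.Vc k (h + 1) (R.st i (h + 1))) • φ (R.st i h) (R.ac i h))) ∧
  (∀ k ∈ Finset.Icc 1 K, ∀ h ∈ Finset.Icc 1 H,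
    R.wti k h = ((R.Sig k h)⁻¹).mulVec
      (∑ i ∈ Finset.Icc 1 (k - 1),
        ((R.sigb2 i h)⁻¹ * (R.V k (h + 1) (R.st i (h + 1))) ^ 2) • φ (R.st i h) (R.ac i h))) ∧
  -- low-switching optimistic and pessimistic value updates
  (∀ k ∈ Finset.Icc 1 K, ∀ h ∈ Finset.Icc 1 H, ∀ s a,
    (R.updTrigger k →
      R.Qup k h s a = min (min (r h s a + R.wha k h ⬝ᵥ φ s a + β * R.bonus k h s a)
        (R.Qup (k - 1) h s a)) H) ∧
    (¬ R.updTrigger k → R.Qup k h s a = R.Qup (k - 1) h s a)) ∧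
  (∀ k ∈ Finset.Icc 1 K, ∀ h ∈ Finset.Icc 1 H, ∀ s a,
    (R.updTrigger k →
      R.Qlo k h s a = max (max (r h s a + R.wch k h ⬝ᵥ φ s a - βb * R.bonus k h s a)
        (R.Qlo (k - 1) h s a)) 0) ∧
    (¬ R.updTrigger k → R.Qlo k h s a = R.Qlo (k - 1) h s a)) ∧
  -- estimated variances `σ_{k,h}² = V̄ V_{k,h+1} + E_{k,h} + D_{k,h} + H`
  (∀ k ∈ Finset.Icc 1 K, ∀ h ∈ Finset.Icc 1 H,
    R.sig2 k h = R.varEst k h + R.Ekh k h + R.Dkh k h + H) ∧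
  -- adjusted variances `σ̄_{k,h}² = max{σ_{k,h}², H, 2d³H² ‖φ(s_h^k,a_h^k)‖_{Σ_{k,h}⁻¹}}`
  (∀ k ∈ Finset.Icc 1 K, ∀ h ∈ Finset.Icc 1 H,
    R.sigb2 k h = max (R.sig2 k h)
      (max (H : ℝ) (2 * (d : ℝ) ^ 3 * H ^ 2 * R.bonus k h (R.st k h) (R.ac k h)))) ∧
  -- Gram matrix updates
  (∀ k ∈ Finset.Icc 1 K, ∀ h ∈ Finset.Icc 1 H,
    R.Sig (k + 1) h = R.Sig k h
      + (R.sigb2 k h)⁻¹ • Matrix.vecMulVec (φ (R.st k h) (R.ac k h)) (φ (R.st k h) (R.ac k h)))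

/-- the episodes `k ∈ [K]` on which the step-`h` optimism error exceeds `2^n Δmin`:
`Q_{k,h}(s_h^k,a_h^k) − Q_h^{π^k}(s_h^k,a_h^k) ≥ 2^n Δmin` -/
def gapCond (R : LSVIRun S A d H K P r φ lam β βb βt) (Δmin : ℝ) (h n : ℕ) (k : ℕ) : Prop :=
  k ∈ Finset.Icc 1 K ∧
    2 ^ n * Δmin ≤ R.Qup k h (R.st k h) (R.ac k h)
      - Qpol H P r (R.pol k) h (R.st k h) (R.ac k h)

/-- `k_i(h,n)` : the `i`-th smallest episode (1-indexed in `i`) satisfying `gapCond` -/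
noncomputable def epi (R : LSVIRun S A d H K P r φ lam β βb βt) (Δmin : ℝ)
    (h n i : ℕ) : ℕ :=
  Nat.nth (R.gapCond Δmin h n) (i - 1)

/-- `K'(h,n)` : the number of episodes satisfying `gapCond` -/
noncomputable def numEp (R : LSVIRun S A d H K P r φ lam β βb βt) (Δmin : ℝ)
    (h n : ℕ) : ℕ :=
  {k | R.gapCond Δmin h n k}.ncard

/-- Concentration event `E₁`: the ridge estimates `ŵ, w̃, w̌` predict
`P_{s,a,h}V_{k,h+1}`, `P_{s,a,h}V²_{k,h+1}`, `P_{s,a,h}V̌_{k,h+1}` up to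
`β̄, β̃, β̄` times the bonus. -/
def E1 (R : LSVIRun S A d H K P r φ lam β βb βt) : Prop :=
  ∀ k ∈ Finset.Icc 1 K, ∀ h ∈ Finset.Icc 1 H, ∀ (s : S) (a : A),
    |R.wha k h ⬝ᵥ φ s a - Pexp P h s a (R.V k (h + 1))| ≤ βb * R.bonus k h s a ∧
    |R.wti k h ⬝ᵥ φ s a - Pexp P h s a (fun s' => (R.V k (h + 1) s') ^ 2)|
      ≤ βt * R.bonus k h s a ∧
    |R.wch k h ⬝ᵥ φ s a - Pexp P h s a (R.Vc k (h + 1))| ≤ βb * R.bonus k h s a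

/-- Concentration event `E₂`: `ŵ` predicts `P_{s,a,h}V_{k,h+1}` up to `β` times the bonus. -/
def E2 (R : LSVIRun S A d H K P r φ lam β βb βt) : Prop :=
  ∀ k ∈ Finset.Icc 1 K, ∀ h ∈ Finset.Icc 1 H, ∀ (s : S) (a : A),
    |R.wha k h ⬝ᵥ φ s a - Pexp P h s a (R.V k (h + 1))| ≤ β * R.bonus k h s a

/-- Azuma–Hoeffding event `E₃` for the martingale differences
`(P_{s_{h'}^{k_i},a_{h'}^{k_i},h'} − 𝟙_{s_{h'+1}^{k_i}})(V_{k_i,h'+1} − V^{π^{k_i}}_{h'+1})`. -/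
def E3 (R : LSVIRun S A d H K P r φ lam β βb βt) (Δmin δ : ℝ) (N : ℕ) : Prop :=
  ∀ h ∈ Finset.Icc 1 H, ∀ n ∈ Finset.Icc 1 N, ∀ K' ∈ Finset.Icc 1 K,
    K' ≤ R.numEp Δmin h n →
    ∑ i ∈ Finset.Icc 1 K', ∑ h' ∈ Finset.Icc h H,
      (Pexp P h' (R.st (R.epi Δmin h n i) h') (R.ac (R.epi Δmin h n i) h')
          (fun s' => R.V (R.epi Δmin h n i) (h' + 1) s'
            - Vpol H P r (R.pol (R.epi Δmin h n i)) (h' + 1) s')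
        - (R.V (R.epi Δmin h n i) (h' + 1) (R.st (R.epi Δmin h n i) (h' + 1))
            - Vpol H P r (R.pol (R.epi Δmin h n i)) (h' + 1)
                (R.st (R.epi Δmin h n i) (h' + 1))))
      ≤ 2 * Real.sqrt (2 * H ^ 3 * K' * Real.log (H * N * K / δ))

/-- Azuma–Hoeffding event `E₄` for the martingale differences
`(P_{s_{h'}^{k_i},a_{h'}^{k_i},h'} − 𝟙_{s_{h'+1}^{k_i}})(V_{k_i,h'+1} − V̌_{k_i,h'+1})`. -/
def E4 (R : LSVIRun S A d H K P r φ lam β βb βt) (Δmin δ : ℝ) (N : ℕ) : Prop :=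
  ∀ h ∈ Finset.Icc 1 H, ∀ n ∈ Finset.Icc 1 N, ∀ K' ∈ Finset.Icc 1 K,
    K' ≤ R.numEp Δmin h n →
    ∑ i ∈ Finset.Icc 1 K', ∑ h' ∈ Finset.Icc h H,
      (Pexp P h' (R.st (R.epi Δmin h n i) h') (R.ac (R.epi Δmin h n i) h')
          (fun s' => R.V (R.epi Δmin h n i) (h' + 1) s'
            - R.Vc (R.epi Δmin h n i) (h' + 1) s')
        - (R.V (R.epi Δmin h n i) (h' + 1) (R.st (R.epi Δmin h n i) (h' + 1))
            - R.Vc (R.epi Δmin h n i) (h' + 1) (R.st (R.epi Δmin h n i) (h' + 1))))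
      ≤ 2 * Real.sqrt (2 * H ^ 3 * K' * Real.log (H * N * K / δ))

/-- Total-variance event `E₅`:
`∑_{i≤K'} ∑_{h≤H} 𝕍_{s_h^{k_i},a_h^{k_i},h}(V^{π^{k_i}}_{h+1}) ≤ 3H²K' + 3H³ log(HNK/δ)`. -/
def E5 (R : LSVIRun S A d H K P r φ lam β βb βt) (Δmin δ : ℝ) (N : ℕ) : Prop :=
  ∀ h ∈ Finset.Icc 1 H, ∀ n ∈ Finset.Icc 1 N, ∀ K' ∈ Finset.Icc 1 K,
    K' ≤ R.numEp Δmin h n →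
    ∑ i ∈ Finset.Icc 1 K', ∑ h' ∈ Finset.Icc 1 H,
      (Pexp P h' (R.st (R.epi Δmin h n i) h') (R.ac (R.epi Δmin h n i) h')
          (fun s' => (Vpol H P r (R.pol (R.epi Δmin h n i)) (h' + 1) s') ^ 2)
        - (Pexp P h' (R.st (R.epi Δmin h n i) h') (R.ac (R.epi Δmin h n i) h')
            (fun s' => Vpol H P r (R.pol (R.epi Δmin h n i)) (h' + 1) s')) ^ 2)
      ≤ 3 * H ^ 2 * K' + 3 * H ^ 3 * Real.log (H * N * K / δ)

end LSVIRun

section OptimismHelpers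

variable {S A : Type*}

lemma Pexp_nonneg' {P : ℕ → S → A → S → ℝ} {h : ℕ} {s : S} {a : A} {f : S → ℝ}
    (hP : ∀ s', 0 ≤ P h s a s') (hf : ∀ s', 0 ≤ f s') : 0 ≤ Pexp P h s a f :=
  tsum_nonneg fun s' => mul_nonneg (hP s') (hf s')

lemma summable_pexp {P : ℕ → S → A → S → ℝ} {h : ℕ} {s : S} {a : A} {f : S → ℝ} {C : ℝ}
    (hP : ∀ s', 0 ≤ P h s a s') (hP1 : HasSum (P h s a) 1)
    (hfC : ∀ s', |f s'| ≤ C) : Summable (fun s' => P h s a s' * f s') := by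
  refine Summable.of_abs (Summable.of_nonneg_of_le (fun s' => abs_nonneg _)
    (fun s' => ?_) (hP1.summable.mul_right C))
  rw [abs_mul, abs_of_nonneg (hP s')]
  exact mul_le_mul_of_nonneg_left (hfC s') (hP s')

lemma pexp_const {P : ℕ → S → A → S → ℝ} {h : ℕ} {s : S} {a : A}
    (hP1 : HasSum (P h s a) 1) (c : ℝ) : Pexp P h s a (fun _ => c) = c := by
  unfold Pexp
  rw [tsum_mul_right, hP1.tsum_eq, one_mul]

lemma pexp_mono {P : ℕ → S → A → S → ℝ} {h : ℕ} {s : S} {a : A} {f g : S → ℝ} {C : ℝ}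
    (hP : ∀ s', 0 ≤ P h s a s') (hP1 : HasSum (P h s a) 1)
    (hfC : ∀ s', |f s'| ≤ C) (hgC : ∀ s', |g s'| ≤ C)
    (hfg : ∀ s', f s' ≤ g s') : Pexp P h s a f ≤ Pexp P h s a g :=
  Summable.tsum_le_tsum (fun s' => mul_le_mul_of_nonneg_left (hfg s') (hP s'))
    (summable_pexp hP hP1 hfC) (summable_pexp hP hP1 hgC)

lemma pexp_le_const {P : ℕ → S → A → S → ℝ} {h : ℕ} {s : S} {a : A} {f : S → ℝ} {C c : ℝ}
    (hP : ∀ s', 0 ≤ P h s a s') (hP1 : HasSum (P h s a) 1)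
    (hfC : ∀ s', |f s'| ≤ C) (hc : ∀ s', f s' ≤ c) : Pexp P h s a f ≤ c := by
  have := pexp_mono (g := fun _ => c) (C := max C |c|) hP hP1
    (fun s' => (hfC s').trans (le_max_left _ _)) (fun s' => le_max_right _ _) hc
  rwa [pexp_const hP1] at this

lemma Vstar_of_le {S A : Type*} [Fintype A] [Nonempty A] {H : ℕ}
    {P : ℕ → S → A → S → ℝ} {r : ℕ → S → A → ℝ} {h : ℕ} (hh : h ≤ H) (s : S) :
    Vstar H P r h s = ⨆ a, (r h s a + Pexp P h s a (fun s' => Vstar H P r (h+1) s')) := by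
  rw [Vstar]; simp [hh]

lemma Vstar_of_gt {S A : Type*} [Fintype A] [Nonempty A] {H : ℕ}
    {P : ℕ → S → A → S → ℝ} {r : ℕ → S → A → ℝ} {h : ℕ} (hh : ¬ h ≤ H) (s : S) :
    Vstar H P r h s = 0 := by
  rw [Vstar]; simp [hh]

lemma Vstar_eq_sup {S A : Type*} [Fintype A] [Nonempty A] {H : ℕ}
    {P : ℕ → S → A → S → ℝ} {r : ℕ → S → A → ℝ} {h : ℕ} (hh : h ≤ H) (s : S) :
    Vstar H P r h s = ⨆ a, Qstar H P r h s a :=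
  Vstar_of_le hh s

lemma Vstar_bounds {S A : Type*} [Fintype A] [Nonempty A] {H : ℕ}
    {P : ℕ → S → A → S → ℝ} {r : ℕ → S → A → ℝ}
    (hP0 : ∀ h s a s', 0 ≤ P h s a s') (hP1 : ∀ h s a, HasSum (P h s a) 1)
    (hr : ∀ h s a, r h s a ∈ Set.Icc (0:ℝ) 1) :
    ∀ h s, 0 ≤ Vstar H P r h s ∧ Vstar H P r h s ≤ ((H + 1 - h : ℕ) : ℝ) := by
  have key : ∀ m h, H + 1 ≤ h + m → ∀ s,
      0 ≤ Vstar H P r h s ∧ Vstar H P r h s ≤ ((H + 1 - h : ℕ) : ℝ) := by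
    intro m
    induction m with
    | zero =>
      intro h hm s
      rw [Vstar_of_gt (by omega)]
      exact ⟨le_refl _, Nat.cast_nonneg _⟩
    | succ m ihm =>
      intro h hm s
      by_cases hh : h ≤ H
      · have ih1 : ∀ s', 0 ≤ Vstar H P r (h+1) s' ∧
            Vstar H P r (h+1) s' ≤ ((H + 1 - (h+1) : ℕ) : ℝ) :=
          fun s' => ihm (h+1) (by omega) s'
        have hcast : ((H + 1 - h : ℕ) : ℝ) = ((H + 1 - (h+1) : ℕ) : ℝ) + 1 := by
          have : (H + 1 - h : ℕ) = (H + 1 - (h+1) : ℕ) + 1 := by omega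
          rw [this]; push_cast; ring
        have hterm : ∀ a, 0 ≤ r h s a + Pexp P h s a (fun s' => Vstar H P r (h+1) s') ∧
            r h s a + Pexp P h s a (fun s' => Vstar H P r (h+1) s') ≤ ((H + 1 - h : ℕ) : ℝ) := by
          intro a
          have hnn : 0 ≤ Pexp P h s a (fun s' => Vstar H P r (h+1) s') :=
            Pexp_nonneg' (hP0 h s a) (fun s' => (ih1 s').1)
          have hle : Pexp P h s a (fun s' => Vstar H P r (h+1) s') ≤ ((H + 1 - (h+1) : ℕ) : ℝ) :=
            pexp_le_const (hP0 h s a) (hP1 h s a)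
              (fun s' => abs_le.mpr ⟨by linarith [(ih1 s').1, Nat.cast_nonneg (α := ℝ) (H + 1 - (h+1))],
                (ih1 s').2⟩) (fun s' => (ih1 s').2)
          have hr1 := hr h s a
          constructor
          · have := hr1.1; linarith
          · have := hr1.2; rw [hcast]; linarith
        rw [Vstar_of_le hh]
        constructor
        · have a0 : A := Classical.arbitrary A
          exact le_trans (hterm a0).1 (le_ciSup (f := fun a => r h s a + Pexp P h s a fun s' => Vstar H P r (h+1) s') (Set.Finite.bddAbove (Set.finite_range _)) a0)
        · exact ciSup_le fun a => (hterm a).2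
      · rw [Vstar_of_gt hh]
        exact ⟨le_refl _, Nat.cast_nonneg _⟩
  intro h s
  exact key (H + 1) h (by omega) s

end OptimismHelpers

/-- Lemma C.1, optimism and pessimism.  Run LSVI-UCB++ on a linear MDP.
On the event `E₁ ∩ E₂`, for every `(s,a,h,k) ∈ S × A × [H] × [K]`:
`Q_{k,h}(s,a) ≥ Q_h^⋆(s,a) ≥ Q̌_{k,h}(s,a)` and `V_{k,h}(s) ≥ V_h^⋆(s) ≥ V̌_{k,h}(s)`. -/
theorem stmt_16 {S A : Type*} [Fintype A] [Nonempty A] {d H K : ℕ}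
    (hd : 1 ≤ d) (hH : 1 ≤ H) (hK : 1 ≤ K)
    (P : ℕ → S → A → S → ℝ) (r : ℕ → S → A → ℝ)
    (φ : S → A → Fin d → ℝ) (θ : ℕ → S → Fin d → ℝ)
    (hMDP : IsLinearMDP d H P r φ θ)
    (lam β βb βt : ℝ) (hlam : 0 < lam)
    (R : LSVIRun S A d H K P r φ lam β βb βt) (hrun : R.ValidRun)
    (hE1 : R.E1) (hE2 : R.E2) :
    ∀ k ∈ Finset.Icc 1 K, ∀ h ∈ Finset.Icc 1 H, ∀ (s : S) (a : A),
      (R.Qlo k h s a ≤ Qstar H P r h s a ∧ Qstar H P r h s a ≤ R.Qup k h s a) ∧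
      (R.Vc k h s ≤ Vstar H P r h s ∧ Vstar H P r h s ≤ R.V k h s) := by
  classical
  obtain ⟨hP0, hP1, hr, -, -, -⟩ := hMDP
  obtain ⟨-, -, hQup0, hQlo0, hQupH1, hQloH1, -, -, -, -, -, -, -, hQupEq, hQloEq, -, -, -⟩ := hrun
  -- basic bounds on Vstar / Qstar
  have hVsb := Vstar_bounds (H := H) hP0 hP1 hr
  have hVs_le_H : ∀ h s, 1 ≤ h → Vstar H P r h s ≤ (H : ℝ) := by
    intro h s h1
    refine (hVsb h s).2.trans ?_
    exact_mod_cast Nat.cast_le.mpr (by omega : H + 1 - h ≤ H)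
  have hVs_abs : ∀ h s, 1 ≤ h → |Vstar H P r h s| ≤ (H : ℝ) :=
    fun h s h1 => abs_le.mpr ⟨by linarith [(hVsb h s).1, Nat.cast_nonneg (α := ℝ) H, hVs_le_H h s h1], hVs_le_H h s h1⟩
  have hQs_nonneg : ∀ h s a, 0 ≤ Qstar H P r h s a := by
    intro h s a
    have : 0 ≤ Pexp P h s a (fun s' => Vstar H P r (h+1) s') :=
      Pexp_nonneg' (hP0 h s a) (fun s' => (hVsb (h+1) s').1)
    have := (hr h s a).1
    unfold Qstar; linarith
  have hQs_le_H : ∀ h, 1 ≤ h → ∀ s a, Qstar H P r h s a ≤ (H : ℝ) := by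
    intro h h1 s a
    have hle : Pexp P h s a (fun s' => Vstar H P r (h+1) s') ≤ ((H + 1 - (h+1) : ℕ) : ℝ) :=
      pexp_le_const (C := (H : ℝ)) (hP0 h s a) (hP1 h s a)
        (fun s' => hVs_abs (h+1) s' (by omega))
        (fun s' => (hVsb (h+1) s').2)
    have hcast : ((H + 1 - (h+1) : ℕ) : ℝ) ≤ (H : ℝ) - 1 := by
      have h2 : (H + 1 - (h+1) : ℕ) ≤ H - 1 := by omega
      calc ((H + 1 - (h+1) : ℕ) : ℝ) ≤ ((H - 1 : ℕ) : ℝ) := Nat.cast_le.mpr h2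
        _ = (H : ℝ) - 1 := by rw [Nat.cast_sub hH]; norm_num
    have := (hr h s a).2
    unfold Qstar; linarith
  -- V-level facts from Q-level facts
  have VofQ : ∀ k h, h ≤ H →
      (∀ s a, 0 ≤ R.Qlo k h s a ∧ R.Qlo k h s a ≤ Qstar H P r h s a ∧
        Qstar H P r h s a ≤ R.Qup k h s a ∧ R.Qup k h s a ≤ (H : ℝ)) →
      ∀ s, 0 ≤ R.Vc k h s ∧ R.Vc k h s ≤ Vstar H P r h s ∧
        Vstar H P r h s ≤ R.V k h s ∧ R.V k h s ≤ (H : ℝ) := by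
    intro k h hh hQ s
    have a0 : A := Classical.arbitrary A
    have hVs := Vstar_eq_sup (P := P) (r := r) hh s
    refine ⟨?_, ?_, ?_, ?_⟩
    · exact le_trans (hQ s a0).1 (le_ciSup (f := fun a => R.Qlo k h s a)
        (Set.Finite.bddAbove (Set.finite_range _)) a0)
    · refine ciSup_le fun a => le_trans (hQ s a).2.1 ?_
      rw [hVs]
      exact le_ciSup (f := fun a => Qstar H P r h s a)
        (Set.Finite.bddAbove (Set.finite_range _)) a
    · rw [hVs]
      exact ciSup_le fun a => le_trans (hQ s a).2.2.1
        (le_ciSup (f := fun a => R.Qup k h s a) (Set.Finite.bddAbove (Set.finite_range _)) a)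
    · exact ciSup_le fun a => (hQ s a).2.2.2
  -- V-level facts at step H+1
  have Vtop : ∀ k s, 0 ≤ R.Vc k (H+1) s ∧ R.Vc k (H+1) s ≤ Vstar H P r (H+1) s ∧
      Vstar H P r (H+1) s ≤ R.V k (H+1) s ∧ R.V k (H+1) s ≤ (H : ℝ) := by
    intro k s
    have h1 : R.V k (H+1) s = 0 := by
      unfold LSVIRun.V; simp [hQupH1]
    have h2 : R.Vc k (H+1) s = 0 := by
      unfold LSVIRun.Vc; simp [hQloH1]
    have h3 : Vstar H P r (H+1) s = 0 := Vstar_of_gt (by omega) s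
    rw [h1, h2, h3]
    exact ⟨le_refl _, le_refl _, le_refl _, Nat.cast_nonneg _⟩
  -- main induction on episodes
  have main : ∀ k, k ≤ K → ∀ h, 1 ≤ h → h ≤ H → ∀ s a,
      0 ≤ R.Qlo k h s a ∧ R.Qlo k h s a ≤ Qstar H P r h s a ∧
      Qstar H P r h s a ≤ R.Qup k h s a ∧ R.Qup k h s a ≤ (H : ℝ) := by
    intro k
    induction k with
    | zero =>
      intro _ h h1 hh s a
      rw [hQup0, hQlo0]
      exact ⟨le_refl _, hQs_nonneg h s a, hQs_le_H h h1 s a, le_refl _⟩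
    | succ k ih =>
      intro hk
      have ihk := ih (by omega)
      have hmemK : (k+1) ∈ Finset.Icc 1 K := Finset.mem_Icc.mpr ⟨by omega, hk⟩
      have step : ∀ m h, H + 1 ≤ h + m → 1 ≤ h → h ≤ H + 1 →
          (∀ s, 0 ≤ R.Vc (k+1) h s ∧ R.Vc (k+1) h s ≤ Vstar H P r h s ∧
            Vstar H P r h s ≤ R.V (k+1) h s ∧ R.V (k+1) h s ≤ (H : ℝ)) ∧
          (h ≤ H → ∀ s a, 0 ≤ R.Qlo (k+1) h s a ∧ R.Qlo (k+1) h s a ≤ Qstar H P r h s a ∧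
            Qstar H P r h s a ≤ R.Qup (k+1) h s a ∧ R.Qup (k+1) h s a ≤ (H : ℝ)) := by
        intro m
        induction m with
        | zero =>
          intro h hm h1 hH1
          have he : h = H + 1 := by omega
          subst he
          exact ⟨Vtop (k+1), fun hh => absurd hh (by omega)⟩
        | succ m ihm =>
          intro h hm h1 hH1
          by_cases hh : h ≤ H
          · have ih1 := (ihm (h+1) (by omega) (by omega) (by omega)).1
            have hmemH : h ∈ Finset.Icc 1 H := Finset.mem_Icc.mpr ⟨h1, hh⟩
            -- abs bounds at step h+1
            have hVabs : ∀ s', |R.V (k+1) (h+1) s'| ≤ (H : ℝ) := fun s' => abs_le.mpr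
              ⟨by linarith [(ih1 s').1, (ih1 s').2.1, (ih1 s').2.2.1, Nat.cast_nonneg (α := ℝ) H,
                (ih1 s').2.2.2], (ih1 s').2.2.2⟩
            have hVcabs : ∀ s', |R.Vc (k+1) (h+1) s'| ≤ (H : ℝ) := fun s' => abs_le.mpr
              ⟨by linarith [(ih1 s').1, Nat.cast_nonneg (α := ℝ) H],
                by linarith [(ih1 s').2.1, (ih1 s').2.2.1, (ih1 s').2.2.2]⟩
            have hVsabs : ∀ s', |Vstar H P r (h+1) s'| ≤ (H : ℝ) :=
              fun s' => hVs_abs (h+1) s' (by omega)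
            have hQ : ∀ s a, 0 ≤ R.Qlo (k+1) h s a ∧ R.Qlo (k+1) h s a ≤ Qstar H P r h s a ∧
                Qstar H P r h s a ≤ R.Qup (k+1) h s a ∧ R.Qup (k+1) h s a ≤ (H : ℝ) := by
              intro s a
              have hQold : 0 ≤ R.Qlo k h s a ∧ R.Qlo k h s a ≤ Qstar H P r h s a ∧
                  Qstar H P r h s a ≤ R.Qup k h s a ∧ R.Qup k h s a ≤ (H : ℝ) :=
                ihk h h1 hh s a
              by_cases hu : R.updTrigger (k+1)
              · have hup := (hQupEq (k+1) hmemK h hmemH s a).1 hu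
                have hlo := (hQloEq (k+1) hmemK h hmemH s a).1 hu
                have hk1 : k + 1 - 1 = k := rfl
                rw [hk1] at hup hlo
                -- concentration bounds
                have e2 := hE2 (k+1) hmemK h hmemH s a
                have e1 := (hE1 (k+1) hmemK h hmemH s a).2.2
                -- optimism
                have m1 : Pexp P h s a (fun s' => Vstar H P r (h+1) s')
                    ≤ Pexp P h s a (R.V (k+1) (h+1)) :=
                  pexp_mono (C := (H : ℝ)) (hP0 h s a) (hP1 h s a) hVsabs hVabs
                    (fun s' => (ih1 s').2.2.1)
                have m2 : Pexp P h s a (R.V (k+1) (h+1))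
                    ≤ R.wha (k+1) h ⬝ᵥ φ s a + β * R.bonus (k+1) h s a := by
                  have := (abs_le.mp e2).1; linarith
                have hX : Qstar H P r h s a
                    ≤ r h s a + R.wha (k+1) h ⬝ᵥ φ s a + β * R.bonus (k+1) h s a := by
                  unfold Qstar; linarith
                -- pessimism
                have m3 : Pexp P h s a (R.Vc (k+1) (h+1))
                    ≤ Pexp P h s a (fun s' => Vstar H P r (h+1) s') :=
                  pexp_mono (C := (H : ℝ)) (hP0 h s a) (hP1 h s a) hVcabs hVsabs
                    (fun s' => (ih1 s').2.1)
                have m4 : R.wch (k+1) h ⬝ᵥ φ s a - βb * R.bonus (k+1) h s a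
                    ≤ Pexp P h s a (R.Vc (k+1) (h+1)) := by
                  have := (abs_le.mp e1).2; linarith
                have hY : r h s a + R.wch (k+1) h ⬝ᵥ φ s a - βb * R.bonus (k+1) h s a
                    ≤ Qstar H P r h s a := by
                  unfold Qstar; linarith
                rw [hup, hlo]
                refine ⟨le_max_right _ _, max_le (max_le hY hQold.2.1) (hQs_nonneg h s a),
                  le_min (le_min hX hQold.2.2.1) (hQs_le_H h h1 s a), min_le_right _ _⟩
              · have hup := (hQupEq (k+1) hmemK h hmemH s a).2 hu
                have hlo := (hQloEq (k+1) hmemK h hmemH s a).2 hu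
                have hk1 : k + 1 - 1 = k := rfl
                rw [hk1] at hup hlo
                rw [hup, hlo]
                exact hQold
            exact ⟨VofQ (k+1) h hh hQ, fun _ => hQ⟩
          · have he : h = H + 1 := by omega
            subst he
            exact ⟨Vtop (k+1), fun hcon => absurd hcon (by omega)⟩
      intro h h1 hh s a
      exact (step (H + 1) h (by omega) h1 (by omega)).2 hh s a
  intro k hk h hh s a
  obtain ⟨hk1, hkK⟩ := Finset.mem_Icc.mp hk
  obtain ⟨hh1, hhH⟩ := Finset.mem_Icc.mp hh
  have hQ := main k hkK h hh1 hhH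
  have hV := VofQ k h hhH hQ s
  exact ⟨⟨(hQ s a).2.1, (hQ s a).2.2.1⟩, hV.2.1, hV.2.2.1⟩
end

section
/- For LSVI-UCB++ run on a linear MDP, on the intersection of the concentration events E_1 and E_2, for every (h,k) ∈ [H] × [K] the estimated variance satisfies |V̄_{s_h^k,a_h^k,h}V_{k,h+1} − V_{s_h^k,a_h^k,h}(V_{k,h+1})| ≤ E_{k,h}. -/
open Finset

open scoped Matrix
open Finset

/-- Clamping to `[lo,hi]` is a contraction towards points of `[lo,hi]`. -/
lemma clamp_close (x p lo hi : ℝ) (hlo : lo ≤ p) (hhi : p ≤ hi) :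
    |max lo (min x hi) - p| ≤ |x - p| := by
  have h1 := le_abs_self (x - p)
  have h2 := neg_abs_le (x - p)
  rcases le_total x hi with hx1 | hx1
  · rw [min_eq_left hx1]
    rcases le_total x lo with hx2 | hx2
    · rw [max_eq_left hx2, abs_le]
      constructor <;> linarith
    · rw [max_eq_right hx2]
  · rw [min_eq_right hx1, max_eq_right (le_trans hlo hhi), abs_le]
    constructor <;> linarith

lemma clamp_bdd (x p lo hi : ℝ) (hlo : lo ≤ p) (hhi : p ≤ hi) :
    |max lo (min x hi) - p| ≤ hi - lo := by
  have ha : lo ≤ max lo (min x hi) := le_max_left _ _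
  have hb : max lo (min x hi) ≤ hi := max_le (le_trans hlo hhi) (min_le_right _ _)
  rw [abs_le]; constructor <;> linarith

lemma varClampA (x p c hi : ℝ) (h0 : 0 ≤ p) (hhi : p ≤ hi) (hx : |x - p| ≤ c) :
    |max 0 (min x hi) - p| ≤ min c hi :=
  le_min (le_trans (clamp_close x p 0 hi h0 hhi) hx)
    (by have := clamp_bdd x p 0 hi h0 hhi; linarith)

lemma varClampB (y p c H : ℝ) (hH : 0 ≤ H) (hp0 : 0 ≤ p) (hpH : p ≤ H)
    (hy : |y - p| ≤ c) :
    |max 0 (min (y ^ 2) (H ^ 2)) - p ^ 2| ≤ min (2 * H * c) (H ^ 2) := by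
  have hc : 0 ≤ c := le_trans (abs_nonneg _) hy
  have hy' := abs_le.mp hy
  have hyu : y - p ≤ c := hy'.2
  have hyl : -c ≤ y - p := hy'.1
  have hpsq : p ^ 2 ≤ H ^ 2 := by nlinarith
  have hbd := clamp_bdd (y ^ 2) (p ^ 2) 0 (H ^ 2) (sq_nonneg _) hpsq
  refine le_min ?_ (by linarith)
  rcases le_total (y ^ 2) (H ^ 2) with hcase | hcase
  · rw [min_eq_left hcase, max_eq_right (sq_nonneg _)]
    have hyH : y ≤ H := by nlinarith [sq_nonneg (y - H)]
    have hyH' : -H ≤ y := by nlinarith [sq_nonneg (y + H)]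
    rw [abs_le]
    constructor
    · -- -(2*H*c) ≤ y^2 - p^2, i.e. p^2 - y^2 ≤ 2*H*c
      rcases le_total 0 (y + p) with hs | hs
      · nlinarith [mul_nonneg (by linarith : (0:ℝ) ≤ c + (y - p)) hs,
          mul_nonneg hc (by linarith : (0:ℝ) ≤ 2 * H - (y + p))]
      · nlinarith [mul_nonneg (by linarith : (0:ℝ) ≤ c - (y - p))
            (by linarith : (0:ℝ) ≤ -(y + p)),
          mul_nonneg hc (by linarith : (0:ℝ) ≤ 2 * H + (y + p))]
    · rcases le_total 0 (y + p) with hs | hs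
      · nlinarith [mul_nonneg (by linarith : (0:ℝ) ≤ c - (y - p)) hs,
          mul_nonneg hc (by linarith : (0:ℝ) ≤ 2 * H - (y + p))]
      · nlinarith [mul_nonneg (by linarith : (0:ℝ) ≤ c + (y - p))
            (by linarith : (0:ℝ) ≤ -(y + p)),
          mul_nonneg hc (by linarith : (0:ℝ) ≤ 2 * H + (y + p))]
  · rw [min_eq_right hcase, max_eq_right (le_trans (sq_nonneg p) hpsq)]
    rw [abs_of_nonneg (by nlinarith)]
    rcases le_total 0 y with hy0 | hy0
    · have hyH : H ≤ y := by nlinarith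
      nlinarith [mul_nonneg (by linarith : (0:ℝ) ≤ c - (H - p))
          (by linarith : (0:ℝ) ≤ H + p),
        mul_nonneg hc (by linarith : (0:ℝ) ≤ 2 * H - (H + p))]
    · have hyH : y ≤ -H := by nlinarith
      nlinarith [mul_nonneg hH (by linarith : (0:ℝ) ≤ c - (p + H)),
        mul_nonneg hH hp0, mul_nonneg hH hc]

/-- On event `E₂`, the optimistic `Q` estimates along a valid run stay in `[0,H]`. -/
lemma lsvi_Qup_bounds {S A : Type*} [Fintype A] [Nonempty A] {d H K : ℕ}
    {P : ℕ → S → A → S → ℝ} {r : ℕ → S → A → ℝ}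
    {φ : S → A → Fin d → ℝ} {lam β βb βt : ℝ}
    (hP0 : ∀ h s a s', 0 ≤ P h s a s')
    (hr0 : ∀ h s a, 0 ≤ r h s a)
    (R : LSVIRun S A d H K P r φ lam β βb βt) (hrun : R.ValidRun) (hE2 : R.E2) :
    ∀ k, k ≤ K → ∀ h, 1 ≤ h → h ≤ H + 1 → ∀ s a,
      0 ≤ R.Qup k h s a ∧ R.Qup k h s a ≤ H := by
  obtain ⟨e1, e2, e3, e4, e5, e6, e7, e8, e9, e10, e11, e12, e13, e14, e15, e16, e17, e18⟩ :=
    hrun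
  intro k
  induction k with
  | zero =>
    intro _ h _ _ s a
    rw [e3]
    exact ⟨Nat.cast_nonneg H, le_refl _⟩
  | succ k IH =>
    intro hkK
    suffices hs : ∀ j h, H + 1 ≤ h + j → 1 ≤ h → h ≤ H + 1 → ∀ s a,
        0 ≤ R.Qup (k + 1) h s a ∧ R.Qup (k + 1) h s a ≤ H by
      intro h h1 h2 s a
      exact hs (H + 1) h (by omega) h1 h2 s a
    intro j
    induction j with
    | zero =>
      intro h hf h1 h2 s a
      have : h = H + 1 := by omega
      subst this
      rw [e5]
      exact ⟨le_refl _, Nat.cast_nonneg H⟩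
    | succ j IHj =>
      intro h hf h1 h2 s a
      by_cases hHe : h = H + 1
      · subst hHe
        rw [e5]
        exact ⟨le_refl _, Nat.cast_nonneg H⟩
      have hhH : h ≤ H := by omega
      have hkmem : k + 1 ∈ Finset.Icc 1 K := by simp [Finset.mem_Icc]; omega
      have hhmem : h ∈ Finset.Icc 1 H := by simp [Finset.mem_Icc]; omega
      have hIHk : ∀ s a, 0 ≤ R.Qup k h s a ∧ R.Qup k h s a ≤ H :=
        fun s a => IH (by omega) h h1 h2 s a
      rcases (e14 (k + 1) hkmem h hhmem s a) with ⟨hupd, hnupd⟩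
      by_cases ht : R.updTrigger (k + 1)
      · rw [hupd ht]
        refine ⟨le_min (le_min ?_ (hIHk s a).1) (Nat.cast_nonneg H),
          le_trans (min_le_right _ _) (le_refl _)⟩
        -- the ridge term is nonnegative
        have hE := abs_le.mp (hE2 (k + 1) hkmem h hhmem s a)
        have hVnn : 0 ≤ Pexp P h s a (R.V (k + 1) (h + 1)) := by
          apply tsum_nonneg
          intro s'
          apply mul_nonneg (hP0 _ _ _ _)
          obtain a0 := Classical.arbitrary A
          have hQ := IHj (h + 1) (by omega) (by omega) (by omega) s' a0
          exact le_trans hQ.1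
            (le_ciSup (Set.Finite.bddAbove (Set.finite_range _)) a0)
        have hr := hr0 h s a
        linarith [hE.1, hE.2, hr, hVnn]
      · rw [hnupd ht]
        simpa using hIHk s a

/-- Lemma C.2, variance estimation error.  Run LSVI-UCB++ on a linear
MDP.  On the event `E₁ ∩ E₂`, for every `(h,k) ∈ [H] × [K]` the estimated variance
satisfies `|V̄_{s_h^k,a_h^k,h}V_{k,h+1} − 𝕍_{s_h^k,a_h^k,h}(V_{k,h+1})| ≤ E_{k,h}`. -/
theorem stmt_17 {S A : Type*} [Fintype A] [Nonempty A] {d H K : ℕ}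
    (hd : 1 ≤ d) (hH : 1 ≤ H) (hK : 1 ≤ K)
    (P : ℕ → S → A → S → ℝ) (r : ℕ → S → A → ℝ)
    (φ : S → A → Fin d → ℝ) (θ : ℕ → S → Fin d → ℝ)
    (hMDP : IsLinearMDP d H P r φ θ)
    (lam β βb βt : ℝ) (hlam : 0 < lam)
    (R : LSVIRun S A d H K P r φ lam β βb βt) (hrun : R.ValidRun)
    (hE1 : R.E1) (hE2 : R.E2) :
    ∀ k ∈ Finset.Icc 1 K, ∀ h ∈ Finset.Icc 1 H,
      |R.varEst k h
        - (Pexp P h (R.st k h) (R.ac k h) (fun s' => (R.V k (h + 1) s') ^ 2)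
            - (Pexp P h (R.st k h) (R.ac k h) (R.V k (h + 1))) ^ 2)|
      ≤ R.Ekh k h := by
  intro k hk h hh
  have hP0 : ∀ h s a s', 0 ≤ P h s a s' := hMDP.1
  have hPsum : ∀ h s a, HasSum (P h s a) 1 := hMDP.2.1
  have hr0 : ∀ h s a, 0 ≤ r h s a := fun h s a => (hMDP.2.2.1 h s a).1
  have hkK : k ≤ K := (Finset.mem_Icc.mp hk).2
  have hk1 : 1 ≤ k := (Finset.mem_Icc.mp hk).1
  have hh1 : 1 ≤ h := (Finset.mem_Icc.mp hh).1
  have hhH : h ≤ H := (Finset.mem_Icc.mp hh).2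
  set s := R.st k h
  set a := R.ac k h
  have hQb := lsvi_Qup_bounds hP0 hr0 R hrun hE2 k hkK
  -- bounds on the optimistic value function at step h+1
  have hV0 : ∀ s', 0 ≤ R.V k (h + 1) s' := by
    intro s'
    obtain a0 := Classical.arbitrary A
    exact le_trans (hQb (h + 1) (by omega) (by omega) s' a0).1
      (le_ciSup (Set.Finite.bddAbove (Set.finite_range _)) a0)
  have hVH : ∀ s', R.V k (h + 1) s' ≤ H := fun s' =>
    ciSup_le fun a0 => (hQb (h + 1) (by omega) (by omega) s' a0).2
  -- bounds on the conditional expectations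
  have hPsummable : Summable (P h s a) := (hPsum h s a).summable
  have htsumP : ∑' s', P h s a s' = 1 := (hPsum h s a).tsum_eq
  set p1 := Pexp P h s a (R.V k (h + 1)) with hp1def
  set p2 := Pexp P h s a (fun s' => (R.V k (h + 1) s') ^ 2) with hp2def
  have hHnn : (0 : ℝ) ≤ H := Nat.cast_nonneg H
  have hsum1 : Summable (fun s' => P h s a s' * R.V k (h + 1) s') :=
    Summable.of_nonneg_of_le
      (fun s' => mul_nonneg (hP0 _ _ _ _) (hV0 s'))
      (fun s' => mul_le_mul_of_nonneg_left (hVH s') (hP0 _ _ _ _))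
      (hPsummable.mul_right (H:ℝ))
  have hsum2 : Summable (fun s' => P h s a s' * (R.V k (h + 1) s') ^ 2) :=
    Summable.of_nonneg_of_le
      (fun s' => mul_nonneg (hP0 _ _ _ _) (sq_nonneg _))
      (fun s' => mul_le_mul_of_nonneg_left
        (pow_le_pow_left₀ (hV0 s') (hVH s') 2) (hP0 _ _ _ _))
      (hPsummable.mul_right ((H : ℝ) ^ 2))
  have hp1nn : 0 ≤ p1 := tsum_nonneg fun s' => mul_nonneg (hP0 _ _ _ _) (hV0 s')
  have hp1le : p1 ≤ H := by
    have h1 : p1 ≤ ∑' s', P h s a s' * (H : ℝ) :=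
      Summable.tsum_le_tsum (fun s' => mul_le_mul_of_nonneg_left (hVH s') (hP0 _ _ _ _))
        hsum1 (hPsummable.mul_right (H:ℝ))
    rwa [tsum_mul_right, htsumP, one_mul] at h1
  have hp2nn : 0 ≤ p2 := tsum_nonneg fun s' => mul_nonneg (hP0 _ _ _ _) (sq_nonneg _)
  have hp2le : p2 ≤ (H : ℝ) ^ 2 := by
    have h1 : p2 ≤ ∑' s', P h s a s' * ((H : ℝ) ^ 2) :=
      Summable.tsum_le_tsum (fun s' => mul_le_mul_of_nonneg_left
          (pow_le_pow_left₀ (hV0 s') (hVH s') 2) (hP0 _ _ _ _))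
        hsum2 (hPsummable.mul_right _)
    rwa [tsum_mul_right, htsumP, one_mul] at h1
  -- concentration bounds
  obtain ⟨hy, hx, -⟩ := hE1 k hk h hh s a
  set b := R.bonus k h s a with hbdef
  set x := R.wti k h ⬝ᵥ φ s a with hxdef
  set y := R.wha k h ⬝ᵥ φ s a with hydef
  have hbnn : 0 ≤ βb * b := le_trans (abs_nonneg _) hy
  have hp1sq : p1 ^ 2 ≤ (H : ℝ) ^ 2 := pow_le_pow_left₀ hp1nn hp1le 2
  -- claim A
  have hA : |max 0 (min x ((H : ℝ) ^ 2)) - p2| ≤ min (βt * b) ((H : ℝ) ^ 2) :=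
    varClampA x p2 (βt * b) ((H : ℝ) ^ 2) hp2nn hp2le hx
  -- claim B
  have hB : |max 0 (min (y ^ 2) ((H : ℝ) ^ 2)) - p1 ^ 2|
      ≤ min (2 * H * βb * b) ((H : ℝ) ^ 2) := by
    have := varClampB y p1 (βb * b) (H : ℝ) hHnn hp1nn hp1le hy
    rwa [show 2 * (H : ℝ) * (βb * b) = 2 * H * βb * b by ring] at this
  -- combine
  have hfeat : R.feat k h = φ s a := rfl
  have hgoal : R.varEst k h
      = max 0 (min x ((H : ℝ) ^ 2)) - max 0 (min (y ^ 2) ((H : ℝ) ^ 2)) := by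
    simp [LSVIRun.varEst, hfeat, hxdef, hydef]
  rw [hgoal, LSVIRun.Ekh]
  have htri : |(max 0 (min x ((H : ℝ) ^ 2)) - p2)
      - (max 0 (min (y ^ 2) ((H : ℝ) ^ 2)) - p1 ^ 2)|
      ≤ |max 0 (min x ((H : ℝ) ^ 2)) - p2|
        + |max 0 (min (y ^ 2) ((H : ℝ) ^ 2)) - p1 ^ 2| := abs_sub _ _
  have heq : max 0 (min x ((H : ℝ) ^ 2)) - max 0 (min (y ^ 2) ((H : ℝ) ^ 2))
      - (p2 - p1 ^ 2)
      = (max 0 (min x ((H : ℝ) ^ 2)) - p2)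
        - (max 0 (min (y ^ 2) ((H : ℝ) ^ 2)) - p1 ^ 2) := by ring
  rw [heq]
  exact le_trans htri (add_le_add hA hB)
end
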